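/- arXiv:1904.04341 — 11 statements merged into one kernel-verified Lean document; each statement's English description precedes it below -/
import Mathlib

section
/- Let m ≥ 2 be an integer, let r ≥ 1 be a real number, and let D be a positive integer with D ≥ 48·r·(log₂ m)². Let a₁, …, a_D be positive integers with Σ_{i=1}^{D} a_i ≤ m. Then there exists an index j with D/4 ≤ j ≤ 3D/4 such that a_j ≤ (1/(12·r·log₂ m)) · min( Σ_{i=1}^{j−1} a_i , Σ_{i=j+1}^{D} a_i ). -/
/-!
If every index `j` of the middle half were bad, i.e. `a_j > c · min(∑_{i<j} a_i, ∑_{i>j} a_i)` with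
`c = 1 / (12 r log₂ m)`, then absorbing `j` multiplies the smaller of the prefix sum before `j` and
the suffix sum after `j` by more than `1 + c`. One of the two kinds of growth happens at least
`(D - 1) / 4` times, and both sums run between `1` and `m`, so `(1 + c) ^ ((D - 1) / 4) ≤ m`.
As `log (1 + c) ≥ 1 / (12 r log₂ m + 1)`, this contradicts `D ≥ 48 r (log₂ m)²`.
-/

open Finset

section Growth

variable {q : ℝ} {b : ℕ}

theorem pow_card_filter_mul_le_of_monotone {f : ℕ → ℝ} (hf : Monotone f) (hq : 0 ≤ q)
    {n : ℕ} (hbn : b ≤ n) :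
    q ^ #{j ∈ Ico b n | q * f j ≤ f (j + 1)} * f b ≤ f n := by
  induction n, hbn using Nat.le_induction with
  | base => simp
  | succ n hbn ih =>
    rw [← insert_Ico_right_eq_Ico_add_one hbn, filter_insert]
    split_ifs with hstep
    · rw [card_insert_of_notMem (by simp), pow_succ']
      calc q * q ^ #{j ∈ Ico b n | q * f j ≤ f (j + 1)} * f b
          ≤ q * f n := by rw [mul_assoc]; exact mul_le_mul_of_nonneg_left ih hq
        _ ≤ f (n + 1) := hstep
    · exact ih.trans (hf n.le_succ)

theorem pow_card_filter_mul_le_of_antitone {g : ℕ → ℝ} (hg : Antitone g) (hq : 0 ≤ q)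
    {n : ℕ} (hbn : b ≤ n) :
    q ^ #{j ∈ Ico b n | q * g (j + 1) ≤ g j} * g n ≤ g b := by
  induction n, hbn using Nat.le_induction with
  | base => simp
  | succ n hbn ih =>
    rw [← insert_Ico_right_eq_Ico_add_one hbn, filter_insert]
    split_ifs with hstep
    · rw [card_insert_of_notMem (by simp), pow_succ]
      calc q ^ #{j ∈ Ico b n | q * g (j + 1) ≤ g j} * q * g (n + 1)
          ≤ q ^ #{j ∈ Ico b n | q * g (j + 1) ≤ g j} * g n := by
            rw [mul_assoc]; exact mul_le_mul_of_nonneg_left hstep (by positivity)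
        _ ≤ g b := ih
    · exact (mul_le_mul_of_nonneg_left (hg n.le_succ) (by positivity)).trans ih

end Growth

theorem mul_sum_Ico_le_or_mul_sum_Icc_le (a : ℕ → ℕ) {D j : ℕ} {c : ℝ} (hj : j ∈ Icc 1 D)
    (hbad : c * min ((∑ i ∈ Icc 1 (j - 1), a i : ℕ) : ℝ) ((∑ i ∈ Icc (j + 1) D, a i : ℕ) : ℝ)
      < a j) :
    (1 + c) * ((∑ i ∈ Ico 1 j, a i : ℕ) : ℝ) ≤ ((∑ i ∈ Ico 1 (j + 1), a i : ℕ) : ℝ) ∨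
      (1 + c) * ((∑ i ∈ Icc (j + 1) D, a i : ℕ) : ℝ) ≤ ((∑ i ∈ Icc j D, a i : ℕ) : ℝ) := by
  obtain ⟨hj1, hjD⟩ := mem_Icc.mp hj
  have hprefix : Icc 1 (j - 1) = Ico 1 j := by ext; simp only [mem_Icc, mem_Ico]; omega
  rw [hprefix] at hbad
  rw [sum_Ico_succ_top hj1, ← insert_Icc_add_one_left_eq_Icc hjD, sum_insert (by simp),
    Nat.cast_add, Nat.cast_add]
  rcases min_choice ((∑ i ∈ Ico 1 j, a i : ℕ) : ℝ) ((∑ i ∈ Icc (j + 1) D, a i : ℕ) : ℝ)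
    with hmin | hmin <;> rw [hmin] at hbad
  · left; linarith
  · right; linarith

theorem exists_pow_le_sum_of_forall_mul_min_lt (a : ℕ → ℕ) {D lo hi : ℕ} {c : ℝ} (hc : 0 ≤ c)
    (hlo : 2 ≤ lo) (hlohi : lo ≤ hi) (hhi : hi < D) (hpos : ∀ i ∈ Icc 1 D, 0 < a i)
    (hbad : ∀ j ∈ Icc lo hi, c * min ((∑ i ∈ Icc 1 (j - 1), a i : ℕ) : ℝ)
      ((∑ i ∈ Icc (j + 1) D, a i : ℕ) : ℝ) < a j) :
    ∃ K, hi + 1 - lo ≤ 2 * K ∧ (1 + c) ^ K ≤ ((∑ i ∈ Icc 1 D, a i : ℕ) : ℝ) := by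
  set F : ℕ → ℝ := fun k ↦ ((∑ i ∈ Ico 1 k, a i : ℕ) : ℝ) with hFdef
  set G : ℕ → ℝ := fun k ↦ ((∑ i ∈ Icc k D, a i : ℕ) : ℝ) with hGdef
  have hF : Monotone F := fun k l hkl ↦ by simp only [hFdef]; gcongr
  have hG : Antitone G := fun k l hkl ↦ by simp only [hGdef]; gcongr
  set A := {j ∈ Ico lo (hi + 1) | (1 + c) * F j ≤ F (j + 1)}
  set B := {j ∈ Ico lo (hi + 1) | (1 + c) * G (j + 1) ≤ G j}
  have hcard : hi + 1 - lo ≤ #A + #B := by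
    calc hi + 1 - lo = #(Icc lo hi) := (Nat.card_Icc lo hi).symm
      _ ≤ #(A ∪ B) := card_le_card fun j hj ↦ by
          rw [← filter_or, mem_filter, Ico_add_one_right_eq_Icc]
          have hj' := mem_Icc.mp hj
          exact ⟨hj, mul_sum_Ico_le_or_mul_sum_Icc_le a (mem_Icc.mpr ⟨by omega, by omega⟩)
            (hbad j hj)⟩
      _ ≤ #A + #B := card_union_le A B
  have hA : (1 + c) ^ #A ≤ ((∑ i ∈ Icc 1 D, a i : ℕ) : ℝ) := by
    have h1 : 1 ≤ F 2 := by
      simpa [hFdef, Nat.one_le_iff_ne_zero, pos_iff_ne_zero] using hpos 1 (by simp; omega)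
    calc (1 + c) ^ #A ≤ (1 + c) ^ #A * F lo :=
          le_mul_of_one_le_right (by positivity) (h1.trans (hF hlo))
      _ ≤ F (hi + 1) := pow_card_filter_mul_le_of_monotone hF (by positivity) (by omega)
      _ ≤ F (D + 1) := hF (by omega)
      _ = _ := by simp only [hFdef, Ico_add_one_right_eq_Icc]
  have hB : (1 + c) ^ #B ≤ ((∑ i ∈ Icc 1 D, a i : ℕ) : ℝ) := by
    have h1 : 1 ≤ G D := by
      simpa [hGdef, Nat.one_le_iff_ne_zero, pos_iff_ne_zero] using hpos D (by simp; omega)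
    calc (1 + c) ^ #B ≤ (1 + c) ^ #B * G (hi + 1) :=
          le_mul_of_one_le_right (by positivity) (h1.trans (hG hhi))
      _ ≤ G lo := pow_card_filter_mul_le_of_antitone hG (by positivity) (by omega)
      _ ≤ G 1 := hG (by omega)
  refine ⟨max #A #B, by omega, ?_⟩
  rcases max_choice #A #B with h | h <;> rw [h] <;> assumption

theorem two_rpow_lt_one_add_inv_pow {r L : ℝ} (hr : 1 ≤ r) (hL : 1 ≤ L) {K : ℕ}
    (hK : 48 * r * L ^ 2 ≤ 4 * K + 1) : (2 : ℝ) ^ L < (1 + 1 / (12 * r * L)) ^ K := by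
  have hrL : 0 < 12 * r * L := by positivity
  have hlog : 1 / (12 * r * L + 1) ≤ Real.log (1 + 1 / (12 * r * L)) := by
    have h := Real.one_sub_inv_le_log_of_pos (x := 1 + 1 / (12 * r * L)) (by positivity)
    convert h using 1
    field_simp
    ring
  have hK' : L * Real.log 2 * (12 * r * L + 1) < K := by
    have hlog2 := Real.log_two_lt_d9
    have hlog2_pos := Real.log_pos one_lt_two
    have hL_le : L ≤ r * L ^ 2 := by nlinarith
    nlinarith
  rw [← Real.log_lt_log_iff (by positivity) (by positivity), Real.log_rpow two_pos,
    Real.log_pow]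
  calc L * Real.log 2 = L * Real.log 2 * (12 * r * L + 1) * (1 / (12 * r * L + 1)) := by
        field_simp
    _ < K * (1 / (12 * r * L + 1)) := by gcongr
    _ ≤ K * Real.log (1 + 1 / (12 * r * L)) := by gcongr

theorem sequence_splitting_general (m : ℕ) (hm : 2 ≤ m) (r : ℝ) (hr : 1 ≤ r)
    (D : ℕ)
    (hDlarge : 48 * r * (Real.logb 2 m) ^ 2 ≤ (D : ℝ))
    (a : ℕ → ℕ) (hpos : ∀ i ∈ Finset.Icc 1 D, 0 < a i)
    (hsum : ∑ i ∈ Finset.Icc 1 D, a i ≤ m) :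
    ∃ j : ℕ, (D : ℝ) / 4 ≤ (j : ℝ) ∧ (j : ℝ) ≤ 3 * (D : ℝ) / 4 ∧
      (a j : ℝ) ≤ (1 / (12 * r * Real.logb 2 m)) *
        min ((∑ i ∈ Finset.Icc 1 (j - 1), a i : ℕ) : ℝ)
            ((∑ i ∈ Finset.Icc (j + 1) D, a i : ℕ) : ℝ) := by
  by_contra! hcon
  set L := Real.logb 2 m
  have hL : 1 ≤ L := by
    rw [Real.le_logb_iff_rpow_le one_lt_two (by positivity)]
    exact_mod_cast hm
  have hD : 48 ≤ D := by exact_mod_cast (show (48 : ℝ) ≤ D by nlinarith)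
  obtain ⟨K, hK, hpow⟩ := exists_pow_le_sum_of_forall_mul_min_lt a (lo := (D + 3) / 4)
    (hi := 3 * D / 4) (c := 1 / (12 * r * L)) (by positivity) (by omega) (by omega) (by omega)
    hpos fun j hj ↦ by
      obtain ⟨hlo, hhi⟩ := mem_Icc.mp hj
      refine hcon j ?_ ?_
      · have : (D : ℝ) ≤ 4 * j := by exact_mod_cast (show D ≤ 4 * j by omega)
        linarith
      · have : (4 * j : ℝ) ≤ 3 * D := by exact_mod_cast (show 4 * j ≤ 3 * D by omega)
        linarith
  have hDK : (D : ℝ) ≤ 4 * K + 1 := by exact_mod_cast (show D ≤ 4 * K + 1 by omega)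
  have hlt := two_rpow_lt_one_add_inv_pow hr hL (K := K) (by linarith)
  rw [Real.rpow_logb two_pos (by norm_num) (by positivity)] at hlt
  have : ((∑ i ∈ Icc 1 D, a i : ℕ) : ℝ) ≤ m := by exact_mod_cast hsum
  linarith

/-- Let `m ≥ 2` be an integer, `r ≥ 1` a real, and `D` a positive integer
with `D ≥ 48 r (log₂ m)²`. Given positive integers `a₁, …, a_D` with `∑ aᵢ ≤ m`, there is an
index `j ∈ [D/4, 3D/4]` such that
`a_j ≤ (1/(12 r log₂ m)) · min(∑_{i<j} aᵢ, ∑_{i>j} aᵢ)`. -/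
theorem sequence_splitting (m : ℕ) (hm : 2 ≤ m) (r : ℝ) (hr : 1 ≤ r)
    (D : ℕ) (hD : 0 < D)
    (hDlarge : 48 * r * (Real.logb 2 m) ^ 2 ≤ (D : ℝ))
    (a : ℕ → ℕ) (hpos : ∀ i ∈ Finset.Icc 1 D, 0 < a i)
    (hsum : ∑ i ∈ Finset.Icc 1 D, a i ≤ m) :
    ∃ j : ℕ, (D : ℝ) / 4 ≤ (j : ℝ) ∧ (j : ℝ) ≤ 3 * (D : ℝ) / 4 ∧
      (a j : ℝ) ≤ (1 / (12 * r * Real.logb 2 m)) *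
        min ((∑ i ∈ Finset.Icc 1 (j - 1), a i : ℕ) : ℝ)
            ((∑ i ∈ Finset.Icc (j + 1) D, a i : ℕ) : ℝ) :=
  sequence_splitting_general m hm r hr D hDlarge a hpos hsum
end

section
/- Let V be a set, let r ∈ V, and let parent : V → V be a function with parent(r) = r and such that for every x ∈ V there exists n ≥ 0 with parentⁿ(x) = r (so parent encodes a spanning tree rooted at r, whose tree edges are the pairs {x, parent(x)} for x ≠ r). For w ∈ V define desc(w) = { x ∈ V : ∃ n ≥ 0, parentⁿ(x) = w }. Let u, v ∈ V with u ≠ v, u ≠ r and v ≠ r, and set D = desc(v) Δ desc(u) (symmetric difference). Then { x ∈ V : x ≠ r and exactly one of x, parent(x) belongs to D } = { u, v }. In other words, the only tree edges crossing the cut induced by D are the parent edges of u and of v. -/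
/-!
A vertex lies in `desc w` iff it is `w` or its parent does, so the edge `{x, parent x}` crosses
`desc w` iff `x = w` and `parent w ∉ desc w`; the latter holds for `w ≠ r` because otherwise `w`
would lie on a cycle of `parent` which also reaches the fixed point `r`. An edge crosses a
symmetric difference iff it crosses exactly one of the two sets, i.e. iff `x = v` xor `x = u`.
-/

open Function

theorem Function.IsPeriodicPt.eq_of_iterate_eq_of_isFixedPt {α : Type*} {f : α → α} {m k : ℕ}
    {w r : α} (hw : IsPeriodicPt f m w) (hm : 0 < m) (hr : IsFixedPt f r) (hk : f^[k] w = r) :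
    w = r := by
  obtain ⟨n, rfl⟩ := Nat.exists_eq_succ_of_ne_zero hm.ne'
  calc w = f^[(n + 1) * k] w := (hw.mul_const k).eq.symm
    _ = f^[n * k] (f^[k] w) := by rw [← iterate_add_apply, Nat.succ_mul]
    _ = r := by rw [hk, (hr.iterate _).eq]

theorem xor_mem_symmDiff_iff {α : Type*} {s t : Set α} {a b : α} :
    Xor (a ∈ symmDiff s t) (b ∈ symmDiff s t) ↔
      Xor (Xor (a ∈ s) (b ∈ s)) (Xor (a ∈ t) (b ∈ t)) := by
  simp only [Set.mem_symmDiff, xor_def]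
  tauto

theorem xor_eq_iff_or_eq {α : Type*} {x u v : α} (huv : u ≠ v) :
    Xor (x = v) (x = u) ↔ x = u ∨ x = v := by
  rw [xor_iff_or_and_not_and, or_comm, and_iff_left_iff_imp]
  rintro _ ⟨rfl, rfl⟩
  exact huv rfl

-- An `abbrev`, so that lemmas about it rewrite the set-builder sets of the main theorem.
abbrev descendants {α : Type*} (f : α → α) (w : α) : Set α := {y | ∃ n : ℕ, f^[n] y = w}

section descendants

variable {α : Type*} (f : α → α) {r w : α}

theorem mem_descendants_iff_eq_or_apply_mem {x : α} :
    x ∈ descendants f w ↔ x = w ∨ f x ∈ descendants f w := by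
  constructor
  · rintro ⟨_ | n, hn⟩
    · exact Or.inl hn
    · exact Or.inr ⟨n, hn⟩
  · rintro (rfl | ⟨n, hn⟩)
    · exact ⟨0, rfl⟩
    · exact ⟨n + 1, hn⟩

variable {f}

theorem apply_notMem_descendants (hr : f r = r) (hreach : ∀ x, ∃ n : ℕ, f^[n] x = r)
    (hw : w ≠ r) : f w ∉ descendants f w := by
  rintro ⟨n, hn⟩
  obtain ⟨k, hk⟩ := hreach w
  have hper : IsPeriodicPt f (n + 1) w := hn
  exact hw (hper.eq_of_iterate_eq_of_isFixedPt n.succ_pos hr hk)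

theorem xor_mem_descendants_iff (hr : f r = r) (hreach : ∀ x, ∃ n : ℕ, f^[n] x = r)
    (hw : w ≠ r) (x : α) : Xor (x ∈ descendants f w) (f x ∈ descendants f w) ↔ x = w := by
  rw [mem_descendants_iff_eq_or_apply_mem f]
  by_cases hxw : x = w
  · subst hxw
    simp only [true_or, xor_true, iff_true]
    exact apply_notMem_descendants hr hreach hw
  · simp only [hxw, false_or, _root_.xor_self]

end descendants

/-- Let `parent : V → V` encode a spanning tree rooted at `r` (i.e.
`parent r = r` and every vertex reaches `r` by iterating `parent`), and for `w ∈ V` let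
`desc w = {x | ∃ n, parentⁿ x = w}`. For distinct non-root vertices `u, v`, the tree edges
`{x, parent x}` (for `x ≠ r`) crossing the set `D = desc v Δ desc u` are exactly the parent
edges of `u` and of `v`; that is, the set of `x ≠ r` such that exactly one of `x, parent x`
lies in `D` is `{u, v}`. -/
theorem tree_edges_crossing_symmDiff_desc {V : Type*} (r u v : V) (parent : V → V)
    (hroot_fix : parent r = r)
    (hreach : ∀ x : V, ∃ n : ℕ, parent^[n] x = r)
    (huv : u ≠ v) (hur : u ≠ r) (hvr : v ≠ r) :
    {x : V | x ≠ r ∧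
        Xor' (x ∈ symmDiff {y : V | ∃ n : ℕ, parent^[n] y = v}
                           {y : V | ∃ n : ℕ, parent^[n] y = u})
             (parent x ∈ symmDiff {y : V | ∃ n : ℕ, parent^[n] y = v}
                                  {y : V | ∃ n : ℕ, parent^[n] y = u})} =
      {u, v} := by
  ext x
  simp only [Xor']
  rw [Set.mem_ofPred_eq, xor_mem_symmDiff_iff, xor_mem_descendants_iff hroot_fix hreach hvr,
    xor_mem_descendants_iff hroot_fix hreach hur, xor_eq_iff_or_eq huv]
  constructor
  · exact And.right
  · rintro (rfl | rfl)
    exacts [⟨hur, Or.inl rfl⟩, ⟨hvr, Or.inr rfl⟩]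
end

section
/- Let k and ℓ be positive real numbers. Let C be a finite set partitioned into pairwise disjoint subsets C₁, …, C_c such that |C_i| ≤ (ℓ/k)·|C| for every i. For each i let F_i ⊆ C_i be a subset with |F_i| ≥ min(ℓ, |C_i|). Then Σ_{i=1}^{c} |F_i| ≥ min(k, |C|). -/
/-- Let `k, ℓ > 0` be reals. Let a finite set `C` be partitioned into
pairwise disjoint subsets `C₁, …, C_c` with `|Cᵢ| ≤ (ℓ/k)·|C|` for every `i`. If `Fᵢ ⊆ Cᵢ`
satisfies `|Fᵢ| ≥ min(ℓ, |Cᵢ|)` for each `i`, then `∑ᵢ |Fᵢ| ≥ min(k, |C|)`. -/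
theorem certificate_cut_count {α : Type*} [DecidableEq α] (k ℓ : ℝ) (hk : 0 < k) (hl : 0 < ℓ)
    (C : Finset α) (c : ℕ) (Ci Fi : Fin c → Finset α)
    (hdisj : ∀ i j : Fin c, i ≠ j → Disjoint (Ci i) (Ci j))
    (hpart : C = Finset.univ.biUnion Ci)
    (hsize : ∀ i : Fin c, ((Ci i).card : ℝ) ≤ (ℓ / k) * (C.card : ℝ))
    (hFsub : ∀ i : Fin c, Fi i ⊆ Ci i)
    (hFbig : ∀ i : Fin c, min ℓ ((Ci i).card : ℝ) ≤ ((Fi i).card : ℝ)) :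
    min k (C.card : ℝ) ≤ ∑ i : Fin c, ((Fi i).card : ℝ) := by
  have hcard : (C.card : ℝ) = ∑ i : Fin c, ((Ci i).card : ℝ) := by
    rw [hpart]
    rw [Finset.card_biUnion (fun i _ j _ hij => hdisj i j hij)]
    push_cast
    ring
  rcases le_or_gt (C.card : ℝ) k with hCk | hCk
  · -- min = |C|
    have hmin : min k (C.card : ℝ) ≤ (C.card : ℝ) := min_le_right _ _
    refine hmin.trans ?_
    rw [hcard]
    refine Finset.sum_le_sum fun i _ => ?_
    refine le_trans ?_ (hFbig i)
    have : ((Ci i).card : ℝ) ≤ ℓ := by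
      calc ((Ci i).card : ℝ) ≤ (ℓ / k) * (C.card : ℝ) := hsize i
        _ ≤ (ℓ / k) * k := by
            apply mul_le_mul_of_nonneg_left hCk (by positivity)
        _ = ℓ := by field_simp
    simp [min_eq_right this]
  · -- k < |C|, min = k
    have hC0 : (0:ℝ) < (C.card : ℝ) := hk.trans hCk
    have hmin : min k (C.card : ℝ) ≤ k := min_le_left _ _
    refine hmin.trans ?_
    have key : ∀ i : Fin c, (k / (C.card : ℝ)) * ((Ci i).card : ℝ) ≤ ((Fi i).card : ℝ) := by
      intro i
      refine le_trans ?_ (hFbig i)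
      rcases le_or_gt ((Ci i).card : ℝ) ℓ with h | h
      · rw [min_eq_right h]
        have h1 : k / (C.card : ℝ) ≤ 1 := by
          rw [div_le_one hC0]; exact hCk.le
        exact mul_le_of_le_one_left (by positivity) h1
      · rw [min_eq_left h.le]
        have h2 : k * ((Ci i).card : ℝ) ≤ ℓ * (C.card : ℝ) := by
          calc k * ((Ci i).card : ℝ) ≤ k * ((ℓ / k) * (C.card : ℝ)) :=
                mul_le_mul_of_nonneg_left (hsize i) hk.le
            _ = ℓ * (C.card : ℝ) := by field_simp
        rw [div_mul_eq_mul_div, div_le_iff₀ hC0]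
        linarith
    calc k = (k / (C.card : ℝ)) * (C.card : ℝ) := by field_simp
      _ = ∑ i : Fin c, (k / (C.card : ℝ)) * ((Ci i).card : ℝ) := by
          rw [hcard, Finset.mul_sum]
      _ ≤ ∑ i : Fin c, ((Fi i).card : ℝ) := Finset.sum_le_sum fun i _ => key i
end

section
/- Let G = (V,E) be a finite simple graph and let ℓ ≥ 1 be an integer. Let F₁, …, F_ℓ ⊆ E be pairwise disjoint edge sets such that for each i, the graph (V, F_i) is acyclic, and for every edge e ∈ E ∖ (F₁ ∪ ⋯ ∪ F_i) the two endpoints of e are joined by a walk using only edges of F_i (i.e., F_i is a maximal spanning forest of the graph (V, E ∖ (F₁ ∪ ⋯ ∪ F_{i−1}))). Then for every S ⊆ V, |∂S ∩ (F₁ ∪ ⋯ ∪ F_ℓ)| ≥ min(ℓ, |∂S|). -/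
/-!
If every edge of `∂S` lies in some forest, all of `∂S` is retained. Otherwise an edge
`s(x, y)` of `∂S` with `x ∈ S`, `y ∉ S` lies in no forest, so by maximality every `Fᵢ`
joins `x` to `y`; that path must leave `S`, giving an edge of `∂S ∩ Fᵢ` for each `i`, and
these `ℓ` edges are distinct because the forests are disjoint.
-/

/-- For a simple graph `G` and a vertex set `S`, `edgeCut G S` is the set of edges of `G`
with exactly one endpoint in `S`. -/
def edgeCut {V : Type*} (G : SimpleGraph V) (S : Set V) : Set (Sym2 V) :=
  {e | e ∈ G.edgeSet ∧ ∃ x ∈ S, ∃ y ∉ S, e = s(x, y)}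

open Function SimpleGraph Set

theorem Nat.card_le_ncard_inter_iUnion {α ι : Type*} {C : Set α} {F : ι → Set α}
    (hdisj : Pairwise (Disjoint on F)) (hmeet : ∀ i, (C ∩ F i).Nonempty)
    (hfin : (C ∩ ⋃ i, F i).Finite) : Nat.card ι ≤ (C ∩ ⋃ i, F i).ncard := by
  choose f hf using hmeet
  have hinj : f.Injective := fun i j hij => by
    by_contra hne
    exact (hdisj hne).ne_of_mem (hf i).2 (hf j).2 hij
  calc Nat.card ι = (range f).ncard := (ncard_range_of_injective hinj).symm
    _ ≤ (C ∩ ⋃ i, F i).ncard :=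
      ncard_le_ncard (range_subset_iff.2 fun i => ⟨(hf i).1, mem_iUnion_of_mem i (hf i).2⟩) hfin

theorem edgeCut_inter_nonempty_of_reachable {V : Type*} {G : SimpleGraph V}
    {F : Set (Sym2 V)} (hF : F ⊆ G.edgeSet) {S : Set V} {x y : V} (hx : x ∈ S) (hy : y ∉ S)
    (h : (fromEdgeSet F).Reachable x y) : (edgeCut G S ∩ F).Nonempty := by
  obtain ⟨p⟩ := h
  obtain ⟨d, -, hd₁, hd₂⟩ := p.exists_boundary_dart S hx hy
  have hd : s(d.fst, d.snd) ∈ F := ((fromEdgeSet_adj F).1 d.adj).1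
  exact ⟨_, ⟨hF hd, d.fst, hd₁, d.snd, hd₂, rfl⟩, hd⟩

theorem spanning_forests_preserve_cuts_general {V : Type*} [Fintype V] (G : SimpleGraph V)
    (ℓ : ℕ) (F : Fin ℓ → Set (Sym2 V))
    (hsub : ∀ i, F i ⊆ G.edgeSet)
    (hdisj : ∀ i j : Fin ℓ, i ≠ j → Disjoint (F i) (F j))
    (hmax : ∀ i : Fin ℓ, ∀ e ∈ G.edgeSet \ (⋃ j ≤ i, F j),
      ∀ x y : V, e = s(x, y) → (SimpleGraph.fromEdgeSet (F i)).Reachable x y) :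
    ∀ S : Set V, min ℓ (edgeCut G S).ncard ≤ (edgeCut G S ∩ ⋃ i, F i).ncard := by
  intro S
  by_cases hcov : edgeCut G S ⊆ ⋃ i, F i
  · rw [inter_eq_self_of_subset_left hcov]
    exact min_le_right _ _
  obtain ⟨e, ⟨heG, x, hx, y, hy, rfl⟩, heF⟩ := not_subset.1 hcov
  have hmeet (i : Fin ℓ) : (edgeCut G S ∩ F i).Nonempty :=
    edgeCut_inter_nonempty_of_reachable (hsub i) hx hy
      (hmax i _ ⟨heG, fun h => heF (iUnion₂_subset_iUnion _ _ h)⟩ x y rfl)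
  calc min ℓ (edgeCut G S).ncard ≤ Nat.card (Fin ℓ) :=
        (min_le_left _ _).trans_eq (Nat.card_fin ℓ).symm
    _ ≤ (edgeCut G S ∩ ⋃ i, F i).ncard :=
      Nat.card_le_ncard_inter_iUnion (fun i j => hdisj i j) hmeet (toFinite _)

/-- Let `G = (V,E)` be a finite simple graph and `ℓ ≥ 1`. Let
`F₁, …, F_ℓ ⊆ E` be pairwise disjoint edge sets such that each `(V, Fᵢ)` is acyclic and,
for every edge `e ∈ E ∖ (F₁ ∪ ⋯ ∪ Fᵢ)`, the endpoints of `e` are joined by a walk using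
only edges of `Fᵢ` (so `Fᵢ` is a maximal spanning forest of `(V, E ∖ (F₁ ∪ ⋯ ∪ F_{i−1}))`).
Then for every `S ⊆ V`, `|∂S ∩ (F₁ ∪ ⋯ ∪ F_ℓ)| ≥ min(ℓ, |∂S|)`. -/
theorem spanning_forests_preserve_cuts {V : Type*} [Fintype V] (G : SimpleGraph V)
    (ℓ : ℕ) (hl : 1 ≤ ℓ) (F : Fin ℓ → Set (Sym2 V))
    (hsub : ∀ i, F i ⊆ G.edgeSet)
    (hdisj : ∀ i j : Fin ℓ, i ≠ j → Disjoint (F i) (F j))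
    (hacyclic : ∀ i, (SimpleGraph.fromEdgeSet (F i)).IsAcyclic)
    (hmax : ∀ i : Fin ℓ, ∀ e ∈ G.edgeSet \ (⋃ j ≤ i, F j),
      ∀ x y : V, e = s(x, y) → (SimpleGraph.fromEdgeSet (F i)).Reachable x y) :
    ∀ S : Set V, min ℓ (edgeCut G S).ncard ≤ (edgeCut G S ∩ ⋃ i, F i).ncard :=
  spanning_forests_preserve_cuts_general G ℓ F hsub hdisj hmax
end

section
/- For every finite simple graph G = (V,E) with |V| = n ≥ 1 and every positive integer k, there exists a subset E' ⊆ E with |E'| ≤ k·(n−1) such that for every S ⊆ V, |∂S ∩ E'| ≥ min(k, |∂S|). In particular, if G has edge connectivity λ then the spanning subgraph (V, E') has edge connectivity at least min(k, λ). -/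
namespace SimpleGraph

variable {V : Type*}

theorem ConnectedComponent.card_lt_card_of_le_of_not_reachable [Finite V]
    {G G' : SimpleGraph V} (h : G ≤ G') {u v : V} (h' : G'.Reachable u v)
    (hG : ¬G.Reachable u v) :
    Nat.card G'.ConnectedComponent < Nat.card G.ConnectedComponent := by
  refine (card_le_card_of_le h).lt_of_ne fun hcard => hG ?_
  have hinj := ((Nat.bijective_iff_surjective_and_card _).mpr
    ⟨surjective_map_ofLE h, hcard.symm⟩).injective
  rw [← ConnectedComponent.eq]
  exact hinj (by simpa [ConnectedComponent.eq] using h')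

theorem IsAcyclic.ncard_edgeSet_add_card_connectedComponent_le [Finite V]
    {F : SimpleGraph V} (hF : F.IsAcyclic) :
    F.edgeSet.ncard + Nat.card F.ConnectedComponent ≤ Nat.card V := by
  induction h : F.edgeSet.ncard generalizing F with
  | zero =>
    simpa using Nat.card_le_card_of_surjective _ (·.exists_rep)
  | succ m ih =>
    obtain ⟨e, he⟩ : F.edgeSet.Nonempty := Set.nonempty_of_ncard_ne_zero (by omega)
    induction e using Sym2.ind with | _ u v => ?_
    have hdel : (F.deleteEdges {s(u, v)}).edgeSet.ncard = m := by
      rw [edgeSet_deleteEdges, Set.ncard_sdiff_singleton_of_mem he]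
      omega
    have hsplit := ConnectedComponent.card_lt_card_of_le_of_not_reachable (F.deleteEdges_le _)
      (F.mem_edgeSet.mp he).reachable (isBridge_iff.mp (isAcyclic_iff_forall_isBridge.mp hF he))
    have hrest := ih (hF.anti (F.deleteEdges_le _)) hdel
    omega

theorem IsAcyclic.ncard_edgeSet_le [Finite V] {F : SimpleGraph V} (hF : F.IsAcyclic) :
    F.edgeSet.ncard ≤ Nat.card V - 1 := by
  have hbound := hF.ncard_edgeSet_add_card_connectedComponent_le
  rcases isEmpty_or_nonempty V with _ | _
  · rw [Nat.card_of_isEmpty (α := V)] at hbound ⊢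
    omega
  · have hpos : 0 < Nat.card F.ConnectedComponent := Nat.card_pos
    omega

end SimpleGraph

section

open SimpleGraph

variable {V : Type*}

theorem edgeCut_eq_inter_edgeSet_of_le {G H : SimpleGraph V} (h : H ≤ G) (S : Set V) :
    edgeCut H S = edgeCut G S ∩ H.edgeSet := by
  ext e
  exact ⟨fun ⟨he, hS⟩ => ⟨⟨edgeSet_mono h he, hS⟩, he⟩, fun ⟨⟨_, hS⟩, he⟩ => ⟨he, hS⟩⟩

theorem edgeCut_fromEdgeSet {G : SimpleGraph V} {E' : Set (Sym2 V)} (h : E' ⊆ G.edgeSet)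
    (S : Set V) : edgeCut (fromEdgeSet E') S = edgeCut G S ∩ E' := by
  rw [edgeCut_eq_inter_edgeSet_of_le ((G.fromEdgeSet_le).mpr (Set.sdiff_subset.trans h)),
    edgeSet_fromEdgeSet, sdiff_eq_left.mpr]
  exact Set.subset_compl_iff_disjoint_right.mp (h.trans G.edgeSet_subset_compl_diagSet)

theorem edgeCut_nonempty_of_reachable_eq {G H : SimpleGraph V}
    (hreach : H.Reachable = G.Reachable) {S : Set V} (hS : (edgeCut G S).Nonempty) :
    (edgeCut H S).Nonempty := by
  obtain ⟨_, hG, x, hx, y, hy, rfl⟩ := hS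
  obtain ⟨p⟩ : H.Reachable x y := hreach ▸ (G.mem_edgeSet.mp hG).reachable
  obtain ⟨d, -, hd, hd'⟩ := p.exists_boundary_dart S hx hy
  exact ⟨d.edge, d.edge_mem, d.fst, hd, d.snd, hd', rfl⟩

theorem min_succ_le_ncard_edgeCut_inter_union [Finite V] (G : SimpleGraph V)
    {E' : Set (Sym2 V)} {F : SimpleGraph V} (hF : F ≤ G.deleteEdges E')
    (hreach : F.Reachable = (G.deleteEdges E').Reachable) (S : Set V) {k : ℕ}
    (hk : min k (edgeCut G S).ncard ≤ (edgeCut G S ∩ E').ncard) :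
    min (k + 1) (edgeCut G S).ncard ≤ (edgeCut G S ∩ (E' ∪ F.edgeSet)).ncard := by
  by_cases hsub : edgeCut G S ⊆ E' ∪ F.edgeSet
  · rw [Set.inter_eq_left.mpr hsub]
    exact min_le_right _ _
  obtain ⟨e, heS, he⟩ := Set.not_subset.mp hsub
  have hleft : (edgeCut (G.deleteEdges E') S).Nonempty := by
    refine ⟨e, ?_⟩
    rw [edgeCut_eq_inter_edgeSet_of_le (G.deleteEdges_le E'), edgeSet_deleteEdges]
    exact ⟨heS, heS.1, fun h => he (Or.inl h)⟩
  obtain ⟨f, hf⟩ := edgeCut_nonempty_of_reachable_eq hreach hleft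
  rw [edgeCut_eq_inter_edgeSet_of_le (hF.trans (G.deleteEdges_le E'))] at hf
  have hfE : f ∉ E' := by
    have := edgeSet_mono hF hf.2
    rw [edgeSet_deleteEdges] at this
    exact this.2
  have hgrow : (edgeCut G S ∩ E').ncard < (edgeCut G S ∩ (E' ∪ F.edgeSet)).ncard := by
    refine Set.ncard_lt_ncard ((Set.ssubset_iff_of_subset
      (Set.inter_subset_inter_right _ Set.subset_union_left)).mpr ?_) (Set.toFinite _)
    exact ⟨f, ⟨hf.1, Or.inr hf.2⟩, fun h => hfE h.2⟩
  omega

theorem exists_sparse_cut_certificate [Finite V] (G : SimpleGraph V) (k : ℕ) :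
    ∃ E' ⊆ G.edgeSet, E'.ncard ≤ k * (Nat.card V - 1) ∧
      ∀ S : Set V, min k (edgeCut G S).ncard ≤ (edgeCut G S ∩ E').ncard := by
  induction k with
  | zero => exact ⟨∅, Set.empty_subset _, by simp, fun S => by simp⟩
  | succ k ih =>
    obtain ⟨E', hE'G, hcard, hcut⟩ := ih
    obtain ⟨F, hFle, hF, hreach⟩ := (G.deleteEdges E').exists_isAcyclic_reachable_eq_le
    refine ⟨E' ∪ F.edgeSet,
      Set.union_subset hE'G (edgeSet_mono (hFle.trans (G.deleteEdges_le E'))), ?_,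
      fun S => min_succ_le_ncard_edgeCut_inter_union G hFle hreach S (hcut S)⟩
    calc (E' ∪ F.edgeSet).ncard ≤ E'.ncard + F.edgeSet.ncard := Set.ncard_union_le _ _
      _ ≤ k * (Nat.card V - 1) + (Nat.card V - 1) := add_le_add hcard hF.ncard_edgeSet_le
      _ = (k + 1) * (Nat.card V - 1) := by ring

end

theorem connectivity_certificate_exists_general {V : Type*} [Fintype V] (G : SimpleGraph V)
    (k : ℕ) :
    ∃ E' ⊆ G.edgeSet, E'.ncard ≤ k * (Fintype.card V - 1) ∧
      (∀ S : Set V, min k (edgeCut G S).ncard ≤ (edgeCut G S ∩ E').ncard) ∧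
      (∀ S : Set V, S.Nonempty → S ≠ Set.univ →
        min k (sInf {m : ℕ | ∃ T : Set V, T.Nonempty ∧ T ≠ Set.univ ∧
            m = (edgeCut G T).ncard})
          ≤ (edgeCut (SimpleGraph.fromEdgeSet E') S).ncard) := by
  obtain ⟨E', hE'G, hcard, hcut⟩ := exists_sparse_cut_certificate G k
  refine ⟨E', hE'G, Nat.card_eq_fintype_card (α := V) ▸ hcard, hcut, fun S hS hSu => ?_⟩
  rw [edgeCut_fromEdgeSet hE'G]
  refine (min_le_min_left k (Nat.sInf_le ?_)).trans (hcut S)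
  exact ⟨S, hS, hSu, rfl⟩

/-- For every finite simple graph `G = (V,E)` with `n = |V| ≥ 1` and every
positive integer `k`, there is `E' ⊆ E` with `|E'| ≤ k(n−1)` such that every cut satisfies
`|∂S ∩ E'| ≥ min(k, |∂S|)`. In particular, if `G` has edge connectivity `λ` (the minimum of
`|∂S|` over nontrivial `S`), then the spanning subgraph `(V, E')` has edge connectivity at
least `min(k, λ)`. -/
theorem connectivity_certificate_exists {V : Type*} [Fintype V] (G : SimpleGraph V)
    (hn : 1 ≤ Fintype.card V) (k : ℕ) (hk : 0 < k) :
    ∃ E' ⊆ G.edgeSet, E'.ncard ≤ k * (Fintype.card V - 1) ∧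
      (∀ S : Set V, min k (edgeCut G S).ncard ≤ (edgeCut G S ∩ E').ncard) ∧
      (∀ S : Set V, S.Nonempty → S ≠ Set.univ →
        min k (sInf {m : ℕ | ∃ T : Set V, T.Nonempty ∧ T ≠ Set.univ ∧
            m = (edgeCut G T).ncard})
          ≤ (edgeCut (SimpleGraph.fromEdgeSet E') S).ncard) :=
  connectivity_certificate_exists_general G k
end

section
/- Let G = (V,E) be a finite simple graph, let δ > 0 be a real number, and assume every vertex of G has degree at least δ. Let (T,U) be a partition of V into two nonempty parts with |∂T| ≤ δ. Let X ⊆ V be a vertex set such that for every A ⊆ X one has e_{G[X]}(A, X∖A) ≥ (1000/δ)·min( vol_X(A), vol_X(X∖A) ) (i.e., the induced subgraph G[X] has conductance at least 1000/δ). Let C ⊆ X be a set such that every u ∈ C has at least (2/5)·deg_G(u) neighbors inside C. Then |C ∩ T| < δ/100 or |C ∩ U| < δ/100. -/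
/-- `crossEdges G A B` is the set of edges of `G` with one endpoint in `A` and the other
in `B`.  For `A, B` disjoint subsets of `X`, this is the set `e_{G[X]}(A,B)` of edges of
the induced subgraph `G[X]` between `A` and `B`. -/
def crossEdges {V : Type*} (G : SimpleGraph V) (A B : Set V) : Set (Sym2 V) :=
  {e | e ∈ G.edgeSet ∧ ∃ x ∈ A, ∃ y ∈ B, e = s(x, y)}

/-- `volIn G X A = ∑_{v ∈ A} deg_{G[X]}(v)`, the volume of `A` in the induced subgraph
`G[X]` (for `A ⊆ X`). -/
noncomputable def volIn {V : Type*} (G : SimpleGraph V) (X A : Set V) : ℕ :=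
  ∑ᶠ v ∈ A, (G.neighborSet v ∩ X).ncard

/-- Lower bound on the volume of `B` in `G[X]`, given a large subset `A ⊆ B ∩ C`
with `C` trimmed. -/
lemma vol_lower_bound {V : Type*} [Fintype V] (G : SimpleGraph V)
    (δ : ℝ) (hδ : 0 < δ)
    (hdeg : ∀ v : V, δ ≤ ((G.neighborSet v).ncard : ℝ))
    (X C : Set V) (hCX : C ⊆ X)
    (htrim : ∀ u ∈ C,
      (2 / 5 : ℝ) * ((G.neighborSet u).ncard : ℝ) ≤ ((G.neighborSet u ∩ C).ncard : ℝ))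
    (A B : Set V) (hAB : A ⊆ B) (hAC : A ⊆ C)
    (hA : δ / 100 ≤ (A.ncard : ℝ)) :
    δ ^ 2 / 250 ≤ (volIn G X B : ℝ) := by
  classical
  have hBfin : B.Finite := Set.toFinite _
  have hAfin : A.Finite := Set.toFinite _
  have hsum : volIn G X B = ∑ v ∈ hBfin.toFinset, (G.neighborSet v ∩ X).ncard := by
    unfold volIn
    exact finsum_mem_eq_finite_toFinset_sum _ hBfin
  -- the sum over A is a lower bound
  have hsub : hAfin.toFinset ⊆ hBfin.toFinset := by
    intro v hv
    simp only [Set.Finite.mem_toFinset] at *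
    exact hAB hv
  have hle : ∑ v ∈ hAfin.toFinset, (G.neighborSet v ∩ X).ncard ≤ volIn G X B := by
    rw [hsum]
    exact Finset.sum_le_sum_of_subset hsub
  -- each term over A is at least (2/5) δ
  have hterm : ∀ v ∈ hAfin.toFinset, (2 / 5 : ℝ) * δ ≤ ((G.neighborSet v ∩ X).ncard : ℝ) := by
    intro v hv
    rw [Set.Finite.mem_toFinset] at hv
    have hvC : v ∈ C := hAC hv
    have h1 := htrim v hvC
    have h2 : ((G.neighborSet v ∩ C).ncard : ℝ) ≤ ((G.neighborSet v ∩ X).ncard : ℝ) := by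
      exact_mod_cast Set.ncard_le_ncard (Set.inter_subset_inter_right _ hCX) (Set.toFinite _)
    have h3 := hdeg v
    nlinarith
  have hcard : (hAfin.toFinset.card : ℝ) * ((2 / 5 : ℝ) * δ)
      ≤ ∑ v ∈ hAfin.toFinset, ((G.neighborSet v ∩ X).ncard : ℝ) := by
    have := Finset.card_nsmul_le_sum hAfin.toFinset
      (fun v => ((G.neighborSet v ∩ X).ncard : ℝ)) ((2 / 5 : ℝ) * δ) hterm
    simpa [nsmul_eq_mul] using this
  have hcardA : (hAfin.toFinset.card : ℝ) = (A.ncard : ℝ) := by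
    rw [Set.ncard_eq_toFinset_card A hAfin]
  have hsumcast : ∑ v ∈ hAfin.toFinset, ((G.neighborSet v ∩ X).ncard : ℝ)
      ≤ (volIn G X B : ℝ) := by
    rw [← Nat.cast_sum]
    exact_mod_cast hle
  rw [hcardA] at hcard
  nlinarith

/-- Let `G` be a finite simple graph of minimum degree at least `δ > 0`;
let `(T,U)` be a partition of `V` into two nonempty parts with `|∂T| ≤ δ`; let `X ⊆ V` be
such that the induced subgraph `G[X]` has conductance at least `1000/δ`
(i.e. `e_{G[X]}(A, X∖A) ≥ (1000/δ)·min(vol_X(A), vol_X(X∖A))` for all `A ⊆ X`); and let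
`C ⊆ X` be trimmed (every `u ∈ C` has at least `(2/5)·deg_G(u)` neighbors inside `C`).
Then `|C ∩ T| < δ/100` or `|C ∩ U| < δ/100`. -/
theorem trimmed_cluster_not_split {V : Type*} [Fintype V] (G : SimpleGraph V)
    (δ : ℝ) (hδ : 0 < δ)
    (hdeg : ∀ v : V, δ ≤ ((G.neighborSet v).ncard : ℝ))
    (T U : Set V) (hTne : T.Nonempty) (hUne : U.Nonempty)
    (hdisj : Disjoint T U) (hcover : T ∪ U = Set.univ)
    (hcut : ((edgeCut G T).ncard : ℝ) ≤ δ)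
    (X : Set V)
    (hexp : ∀ A ⊆ X,
      (1000 / δ) * min ((volIn G X A : ℝ)) ((volIn G X (X \ A) : ℝ))
        ≤ ((crossEdges G A (X \ A)).ncard : ℝ))
    (C : Set V) (hCX : C ⊆ X)
    (htrim : ∀ u ∈ C,
      (2 / 5 : ℝ) * ((G.neighborSet u).ncard : ℝ) ≤ ((G.neighborSet u ∩ C).ncard : ℝ)) :
    ((C ∩ T).ncard : ℝ) < δ / 100 ∨ ((C ∩ U).ncard : ℝ) < δ / 100 := by
  by_contra hcon
  push_neg at hcon
  obtain ⟨hT, hU⟩ := hcon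
  -- cross edges of the partition (X ∩ T, X \ (X ∩ T)) lie in the cut ∂T
  have hsub : crossEdges G (X ∩ T) (X \ (X ∩ T)) ⊆ edgeCut G T := by
    rintro e ⟨he, x, hx, y, hy, rfl⟩
    exact ⟨he, x, hx.2, y, fun hyT => hy.2 ⟨hy.1, hyT⟩, rfl⟩
  have hcross : ((crossEdges G (X ∩ T) (X \ (X ∩ T))).ncard : ℝ) ≤ δ := by
    refine le_trans ?_ hcut
    exact_mod_cast Set.ncard_le_ncard hsub (Set.toFinite _)
  -- volume lower bounds
  have hvT : δ ^ 2 / 250 ≤ (volIn G X (X ∩ T) : ℝ) :=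
    vol_lower_bound G δ hδ hdeg X C hCX htrim (C ∩ T) (X ∩ T)
      (fun v hv => ⟨hCX hv.1, hv.2⟩) Set.inter_subset_left hT
  have hCU : C ∩ U ⊆ X \ (X ∩ T) := by
    rintro v ⟨hvC, hvU⟩
    exact ⟨hCX hvC, fun h => hdisj.ne_of_mem h.2 hvU rfl⟩
  have hvU : δ ^ 2 / 250 ≤ (volIn G X (X \ (X ∩ T)) : ℝ) :=
    vol_lower_bound G δ hδ hdeg X C hCX htrim (C ∩ U) (X \ (X ∩ T))
      hCU Set.inter_subset_left hU
  have hmain := hexp (X ∩ T) Set.inter_subset_left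
  have hmin : δ ^ 2 / 250 ≤ min ((volIn G X (X ∩ T) : ℝ)) ((volIn G X (X \ (X ∩ T)) : ℝ)) :=
    le_min hvT hvU
  have h1 : (1000 / δ) * (δ ^ 2 / 250) ≤ δ := by
    calc (1000 / δ) * (δ ^ 2 / 250)
        ≤ (1000 / δ) * min ((volIn G X (X ∩ T) : ℝ)) ((volIn G X (X \ (X ∩ T)) : ℝ)) := by
          apply mul_le_mul_of_nonneg_left hmin (by positivity)
      _ ≤ ((crossEdges G (X ∩ T) (X \ (X ∩ T))).ncard : ℝ) := hmain
      _ ≤ δ := hcross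
  have h2 : (1000 / δ) * (δ ^ 2 / 250) = 4 * δ := by field_simp; ring
  rw [h2] at h1
  linarith
end

section
/- Let G = (V,E) be a finite simple graph with minimum degree at least δ, where δ ≥ 300 is a real number. Let (T,U) be a partition of V with |∂T| ≤ δ. Let C ⊆ V be a set such that every u ∈ C has at least (2/5)·deg_G(u) neighbors inside C, and suppose it is not the case that both |C ∩ T| ≥ δ/100 and |C ∩ U| ≥ δ/100. Then |C ∩ T| ≤ 2 or |C ∩ U| ≤ 2. -/
lemma trimmed_aux {V : Type*} [Fintype V] (G : SimpleGraph V)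
    (δ : ℝ) (hδ : 300 ≤ δ)
    (hdeg : ∀ v : V, δ ≤ ((G.neighborSet v).ncard : ℝ))
    (T U : Set V) (hdisj : Disjoint T U) (hcover : T ∪ U = Set.univ)
    (hcut : ((edgeCut G T).ncard : ℝ) ≤ δ)
    (C : Set V)
    (htrim : ∀ u ∈ C,
      (2 / 5 : ℝ) * ((G.neighborSet u).ncard : ℝ) ≤ ((G.neighborSet u ∩ C).ncard : ℝ))
    (hsmall : ((C ∩ T).ncard : ℝ) < δ / 100)
    (hT3 : 3 ≤ (C ∩ T).ncard) : False := by
  classical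
  set t : ℝ := ((C ∩ T).ncard : ℝ) with ht
  set A : Finset V := (C ∩ T).toFinset with hA
  have hAcard : (A.card : ℝ) = t := by
    rw [hA, ht, Set.ncard_eq_toFinset_card']
  set Nu : V → Finset V :=
    fun u => Finset.univ.filter (fun v => v ∈ G.neighborSet u ∧ v ∈ C ∧ v ∈ U) with hNu
  set P : Finset (V × V) := A.biUnion (fun u => {u} ×ˢ Nu u) with hP
  have hmemP : ∀ p : V × V, p ∈ P ↔
      (p.1 ∈ C ∧ p.1 ∈ T) ∧ (p.2 ∈ G.neighborSet p.1 ∧ p.2 ∈ C ∧ p.2 ∈ U) := by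
    intro p
    rw [hP]
    simp only [Finset.mem_biUnion, Finset.mem_product, Finset.mem_singleton, hA,
      Set.mem_toFinset, hNu, Finset.mem_filter, Finset.mem_univ, true_and,
      Set.mem_inter_iff]
    constructor
    · rintro ⟨u, hu, rfl, h2⟩; exact ⟨hu, h2⟩
    · rintro ⟨h1, h2⟩; exact ⟨p.1, h1, rfl, h2⟩
  have hPcard : P.card = ∑ u ∈ A, (Nu u).card := by
    rw [hP, Finset.card_biUnion]
    · refine Finset.sum_congr rfl fun u _ => ?_
      simp [Finset.card_product]
    · intro x hx y hy hxy
      simp only [Finset.disjoint_left, Finset.mem_product, Finset.mem_singleton]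
      rintro p ⟨rfl, -⟩ ⟨h, -⟩
      exact hxy h
  -- lower bound on each Nu
  have hNuB : ∀ u ∈ A, (2/5)*δ - t ≤ ((Nu u).card : ℝ) := by
    intro u hu
    rw [hA, Set.mem_toFinset] at hu
    have h1 := htrim u hu.1
    have h2 := hdeg u
    have hNueq : ((Nu u).card : ℝ) = ((G.neighborSet u ∩ (C ∩ U)).ncard : ℝ) := by
      have heq : Nu u = (G.neighborSet u ∩ (C ∩ U)).toFinset := by
        ext v; simp [hNu, and_assoc]
      rw [heq, Set.ncard_eq_toFinset_card']
    have hsplit : (G.neighborSet u ∩ C) ⊆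
        (G.neighborSet u ∩ (C ∩ T)) ∪ (G.neighborSet u ∩ (C ∩ U)) := by
      intro v hv
      have : v ∈ T ∪ U := by rw [hcover]; trivial
      rcases this with h | h
      · exact Or.inl ⟨hv.1, hv.2, h⟩
      · exact Or.inr ⟨hv.1, hv.2, h⟩
    have hle : ((G.neighborSet u ∩ C).ncard : ℝ) ≤
        t + ((G.neighborSet u ∩ (C ∩ U)).ncard : ℝ) := by
      have h3 := Set.ncard_le_ncard hsplit (Set.toFinite _)
      have h4 := Set.ncard_union_le (G.neighborSet u ∩ (C ∩ T)) (G.neighborSet u ∩ (C ∩ U))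
      have h5 : (G.neighborSet u ∩ (C ∩ T)).ncard ≤ (C ∩ T).ncard :=
        Set.ncard_le_ncard Set.inter_subset_right (Set.toFinite _)
      rw [ht]
      exact_mod_cast (h3.trans (h4.trans (Nat.add_le_add_right h5 _)))
    rw [hNueq]
    nlinarith [h1, h2, hle]
  have hsum : t * ((2/5)*δ - t) ≤ (P.card : ℝ) := by
    rw [hPcard]
    push_cast
    calc t * ((2/5)*δ - t) = ∑ _u ∈ A, ((2/5)*δ - t) := by
          rw [Finset.sum_const, nsmul_eq_mul, hAcard]
      _ ≤ ∑ u ∈ A, ((Nu u).card : ℝ) := Finset.sum_le_sum hNuB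
  -- injection into edgeCut
  have hUT : ∀ v : V, v ∈ U → v ∉ T := fun v hv hvT => hdisj.ne_of_mem hvT hv rfl
  have hinj : Set.InjOn (fun p : V × V => s(p.1, p.2)) ↑P := by
    intro p hp q hq h
    rw [Finset.mem_coe, hmemP] at hp hq
    simp only [Sym2.eq, Sym2.rel_iff', Prod.mk.injEq, Prod.swap_prod_mk] at h
    rcases h with ⟨h1, h2⟩ | ⟨h1, h2⟩
    · exact Prod.ext h1 h2
    · exact absurd (h1 ▸ hp.1.2) (hUT q.2 hq.2.2.2)
  have himsub : P.image (fun p : V × V => s(p.1, p.2)) ⊆ (edgeCut G T).toFinset := by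
    intro e he
    simp only [Finset.mem_image] at he
    obtain ⟨p, hp, rfl⟩ := he
    rw [hmemP] at hp
    rw [Set.mem_toFinset]
    refine ⟨?_, p.1, hp.1.2, p.2, hUT p.2 hp.2.2.2, rfl⟩
    rw [SimpleGraph.mem_edgeSet]
    exact hp.2.1
  have hPle : (P.card : ℝ) ≤ δ := by
    have h1 : P.card = (P.image (fun p : V × V => s(p.1, p.2))).card :=
      (Finset.card_image_of_injOn hinj).symm
    have h2 : (P.image (fun p : V × V => s(p.1, p.2))).card ≤ (edgeCut G T).toFinset.card :=
      Finset.card_le_card himsub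
    have h3 : (edgeCut G T).toFinset.card = (edgeCut G T).ncard :=
      (Set.ncard_eq_toFinset_card' _).symm
    calc (P.card : ℝ) = ((P.image (fun p : V × V => s(p.1, p.2))).card : ℝ) := by rw [← h1]
      _ ≤ ((edgeCut G T).ncard : ℝ) := by rw [← h3]; exact_mod_cast h2
      _ ≤ δ := hcut
  have ht3 : (3 : ℝ) ≤ t := by rw [ht]; exact_mod_cast hT3
  nlinarith [hsum, hPle, ht3, hsmall, hδ, mul_nonneg (sub_nonneg.2 ht3) (sub_nonneg.2 (le_of_lt (show t < δ/100 from hsmall)))]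


/-- Let `G` be a finite simple graph with minimum degree at least
`δ ≥ 300`, let `(T,U)` be a partition of `V` with `|∂T| ≤ δ`, and let `C` be trimmed
(every `u ∈ C` has at least `(2/5)·deg_G(u)` neighbors inside `C`). If it is not the case
that both `|C ∩ T| ≥ δ/100` and `|C ∩ U| ≥ δ/100`, then `|C ∩ T| ≤ 2` or `|C ∩ U| ≤ 2`. -/
theorem trimmed_cluster_small_side {V : Type*} [Fintype V] (G : SimpleGraph V)
    (δ : ℝ) (hδ : 300 ≤ δ)
    (hdeg : ∀ v : V, δ ≤ ((G.neighborSet v).ncard : ℝ))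
    (T U : Set V) (hdisj : Disjoint T U) (hcover : T ∪ U = Set.univ)
    (hcut : ((edgeCut G T).ncard : ℝ) ≤ δ)
    (C : Set V)
    (htrim : ∀ u ∈ C,
      (2 / 5 : ℝ) * ((G.neighborSet u).ncard : ℝ) ≤ ((G.neighborSet u ∩ C).ncard : ℝ))
    (hnot : ¬ (δ / 100 ≤ ((C ∩ T).ncard : ℝ) ∧ δ / 100 ≤ ((C ∩ U).ncard : ℝ))) :
    (C ∩ T).ncard ≤ 2 ∨ (C ∩ U).ncard ≤ 2 := by
  classical
  by_contra hcon
  push_neg at hcon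
  obtain ⟨h1, h2⟩ := hcon
  have hT3 : 3 ≤ (C ∩ T).ncard := h1
  have hU3 : 3 ≤ (C ∩ U).ncard := h2
  have hmemTU : ∀ v : V, v ∈ T ∨ v ∈ U := fun v =>
    (hcover ▸ Set.mem_univ v : v ∈ T ∪ U)
  have hcutU : ((edgeCut G U).ncard : ℝ) ≤ δ := by
    have heq : edgeCut G U = edgeCut G T := by
      ext e
      simp only [edgeCut, Set.mem_setOf_eq]
      constructor
      · rintro ⟨he, x, hx, y, hy, rfl⟩
        have hyT : y ∈ T := (hmemTU y).resolve_right hy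
        have hxT : x ∉ T := fun h => hdisj.ne_of_mem h hx rfl
        exact ⟨he, y, hyT, x, hxT, Sym2.eq_swap⟩
      · rintro ⟨he, x, hx, y, hy, rfl⟩
        have hyU : y ∈ U := (hmemTU y).resolve_left hy
        have hxU : x ∉ U := fun h => hdisj.ne_of_mem hx h rfl
        exact ⟨he, y, hyU, x, hxU, Sym2.eq_swap⟩
    rw [heq]; exact hcut
  rw [not_and_or] at hnot
  rcases hnot with h | h
  · exact trimmed_aux G δ hδ hdeg T U hdisj hcover hcut C htrim (lt_of_not_ge h) hT3
  · exact trimmed_aux G δ hδ hdeg U T hdisj.symm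
      (by rw [Set.union_comm]; exact hcover) hcutU C htrim (lt_of_not_ge h) hU3
end

section
/- Let G = (V,E) be a finite simple graph. Let (T,U) be a partition of V with |T| ≥ 2 and |U| ≥ 2 such that |∂T| ≤ |∂S| for every S with ∅ ≠ S ⊊ V (i.e., (T,U) is a non-trivial minimum edge cut of G). Let C ⊆ V be a set for which it is not the case that both |C ∩ T| > 2 and |C ∩ U| > 2, and define Core(C) = { r ∈ C : 2·|N_G(r) ∩ C| > deg_G(r) + 2 } (the vertices of C having more than deg_G(r)/2 + 1 neighbors inside C). Then T ∩ Core(C) = ∅ or U ∩ Core(C) = ∅. -/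
lemma edgeCut_compl {V : Type*} (G : SimpleGraph V) (S : Set V) :
    edgeCut G Sᶜ = edgeCut G S := by
  ext e
  constructor
  · rintro ⟨he, x, hx, y, hy, rfl⟩
    exact ⟨he, y, by simpa using hy, x, by simpa using hx, Sym2.eq_swap⟩
  · rintro ⟨he, x, hx, y, hy, rfl⟩
    exact ⟨he, y, by simpa using hy, x, by simpa using hx, Sym2.eq_swap⟩

lemma edgeCut_decomp_in {V : Type*} (G : SimpleGraph V) (S : Set V) (r : V) (hr : r ∈ S) :
    edgeCut G S = (edgeCut G S ∩ {e | r ∉ e}) ∪ (fun y => s(r, y)) '' (G.neighborSet r ∩ Sᶜ) := by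
  apply Set.Subset.antisymm
  · rintro e ⟨he, x, hx, y, hy, rfl⟩
    by_cases hre : r ∈ (s(x, y) : Sym2 V)
    · right
      rcases Sym2.mem_iff.mp hre with h | h
      · subst h
        exact ⟨y, ⟨G.mem_edgeSet.mp he, hy⟩, rfl⟩
      · subst h
        exact absurd hr hy
    · exact Or.inl ⟨⟨he, x, hx, y, hy, rfl⟩, hre⟩
  · rintro e (⟨he, _⟩ | ⟨y, ⟨hadj, hy⟩, rfl⟩)
    · exact he
    · exact ⟨G.mem_edgeSet.mpr hadj, r, hr, y, hy, rfl⟩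

lemma edgeCut_decomp_out {V : Type*} (G : SimpleGraph V) (S : Set V) (r : V) (hr : r ∉ S) :
    edgeCut G S = (edgeCut G S ∩ {e | r ∉ e}) ∪ (fun y => s(r, y)) '' (G.neighborSet r ∩ S) := by
  apply Set.Subset.antisymm
  · rintro e ⟨he, x, hx, y, hy, rfl⟩
    by_cases hre : r ∈ (s(x, y) : Sym2 V)
    · right
      rcases Sym2.mem_iff.mp hre with h | h
      · subst h; exact absurd hx hr
      · subst h
        exact ⟨x, ⟨(G.mem_edgeSet.mp he).symm, hx⟩, Sym2.eq_swap⟩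
    · exact Or.inl ⟨⟨he, x, hx, y, hy, rfl⟩, hre⟩
  · rintro e (⟨he, _⟩ | ⟨y, ⟨hadj, hy⟩, rfl⟩)
    · exact he
    · exact ⟨G.mem_edgeSet.mpr hadj, y, hy, r, hr, Sym2.eq_swap⟩

lemma sMk_injective {V : Type*} (r : V) : Function.Injective (fun y => s(r, y)) :=
  fun _ _ h => Sym2.congr_right.mp h

lemma ncard_edgeCut_in {V : Type*} [Fintype V] (G : SimpleGraph V) (S : Set V) (r : V)
    (hr : r ∈ S) :
    (edgeCut G S).ncard
      = (edgeCut G S ∩ {e | r ∉ e}).ncard + (G.neighborSet r ∩ Sᶜ).ncard := by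
  conv_lhs => rw [edgeCut_decomp_in G S r hr]
  rw [Set.ncard_union_eq ?_ (Set.toFinite _) (Set.toFinite _),
    Set.ncard_image_of_injective _ (sMk_injective r)]
  rw [Set.disjoint_left]
  rintro e ⟨_, hre⟩ ⟨y, _, rfl⟩
  exact hre (Sym2.mem_mk_left r y)

lemma ncard_edgeCut_out {V : Type*} [Fintype V] (G : SimpleGraph V) (S : Set V) (r : V)
    (hr : r ∉ S) :
    (edgeCut G S).ncard
      = (edgeCut G S ∩ {e | r ∉ e}).ncard + (G.neighborSet r ∩ S).ncard := by
  conv_lhs => rw [edgeCut_decomp_out G S r hr]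
  rw [Set.ncard_union_eq ?_ (Set.toFinite _) (Set.toFinite _),
    Set.ncard_image_of_injective _ (sMk_injective r)]
  rw [Set.disjoint_left]
  rintro e ⟨_, hre⟩ ⟨y, _, rfl⟩
  exact hre (Sym2.mem_mk_left r y)

lemma core_empty_aux {V : Type*} [Fintype V] (G : SimpleGraph V) (T : Set V)
    (hT2 : 2 ≤ T.ncard) (hTc : Tᶜ.Nonempty)
    (hmin : ∀ S : Set V, S.Nonempty → S ≠ Set.univ →
      (edgeCut G T).ncard ≤ (edgeCut G S).ncard)
    (C : Set V) (hCT : (C ∩ T).ncard ≤ 2) :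
    T ∩ {r ∈ C | (G.neighborSet r).ncard + 2 < 2 * (G.neighborSet r ∩ C).ncard} = ∅ := by
  by_contra h
  obtain ⟨r, hrT, hrC, hcore⟩ :
      ∃ r, r ∈ T ∧ r ∈ C ∧ (G.neighborSet r).ncard + 2 < 2 * (G.neighborSet r ∩ C).ncard := by
    obtain ⟨r, hr⟩ := Set.nonempty_iff_ne_empty.mpr h
    exact ⟨r, hr.1, hr.2.1, hr.2.2⟩
  -- the flipped set T \ {r}
  have hSne : (T \ {r}).Nonempty := by
    obtain ⟨b, hb, hbr⟩ := Set.exists_ne_of_one_lt_ncard (s := T) (by omega) r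
    exact ⟨b, hb, hbr⟩
  have hSnu : T \ {r} ≠ Set.univ := by
    obtain ⟨u, hu⟩ := hTc
    intro hcon
    exact hu (((hcon ▸ Set.mem_univ u : u ∈ T \ {r})).1)
  have hle := hmin (T \ {r}) hSne hSnu
  -- compare the two cuts
  have h1 := ncard_edgeCut_in G T r hrT
  have h2 := ncard_edgeCut_out G (T \ {r}) r (by simp)
  have hA : edgeCut G (T \ {r}) ∩ {e | r ∉ e} = edgeCut G T ∩ {e | r ∉ e} := by
    ext e
    constructor
    · rintro ⟨⟨he, x, hx, y, hy, rfl⟩, hre⟩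
      refine ⟨⟨he, x, hx.1, y, ?_, rfl⟩, hre⟩
      intro hyT
      refine hy ⟨hyT, ?_⟩
      rintro rfl
      exact hre (Sym2.mem_mk_right x y)
    · rintro ⟨⟨he, x, hx, y, hy, rfl⟩, hre⟩
      refine ⟨⟨he, x, ⟨hx, ?_⟩, y, fun hyS => hy hyS.1, rfl⟩, hre⟩
      rintro rfl
      exact hre (Sym2.mem_mk_left x y)
  have hN : G.neighborSet r ∩ (T \ {r}) = G.neighborSet r ∩ T := by
    ext y
    simp only [Set.mem_inter_iff, Set.mem_diff, Set.mem_singleton_iff, and_assoc]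
    constructor
    · rintro ⟨h1, h2, _⟩; exact ⟨h1, h2⟩
    · rintro ⟨h1, h2⟩
      refine ⟨h1, h2, ?_⟩
      rintro rfl
      exact G.notMem_neighborSet_self h1
  rw [hA, hN] at h2
  -- flipping r does not decrease the cut
  have hflip : (G.neighborSet r ∩ Tᶜ).ncard ≤ (G.neighborSet r ∩ T).ncard := by omega
  -- counting neighbors of r in C
  have hsub1 : G.neighborSet r ∩ C ⊆ (G.neighborSet r ∩ C ∩ T) ∪ (G.neighborSet r ∩ C ∩ Tᶜ) := by
    intro y hy
    by_cases hyT : y ∈ T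
    · exact Or.inl ⟨hy, hyT⟩
    · exact Or.inr ⟨hy, hyT⟩
  have hc1 : (G.neighborSet r ∩ C).ncard
      ≤ (G.neighborSet r ∩ C ∩ T).ncard + (G.neighborSet r ∩ C ∩ Tᶜ).ncard :=
    le_trans (Set.ncard_le_ncard hsub1 (Set.toFinite _)) (Set.ncard_union_le _ _)
  have hc2 : (G.neighborSet r ∩ C ∩ T).ncard ≤ 1 := by
    have hsub : G.neighborSet r ∩ C ∩ T ⊆ (C ∩ T) \ {r} := by
      rintro y ⟨⟨hyN, hyC⟩, hyT⟩
      refine ⟨⟨hyC, hyT⟩, ?_⟩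
      rintro rfl
      exact G.notMem_neighborSet_self hyN
    have := Set.ncard_le_ncard hsub (Set.toFinite _)
    rw [Set.ncard_diff_singleton_of_mem (show r ∈ C ∩ T from ⟨hrC, hrT⟩)] at this
    omega
  have hc3 : (G.neighborSet r ∩ C ∩ Tᶜ).ncard ≤ (G.neighborSet r ∩ Tᶜ).ncard :=
    Set.ncard_le_ncard (fun y hy => ⟨hy.1.1, hy.2⟩) (Set.toFinite _)
  have hc4 : (G.neighborSet r ∩ T).ncard + (G.neighborSet r ∩ Tᶜ).ncard
      = (G.neighborSet r).ncard := by
    have := Set.ncard_inter_add_ncard_diff_eq_ncard (G.neighborSet r) T (Set.toFinite _)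
    rwa [Set.diff_eq] at this
  omega

/-- Let `G` be a finite simple graph and `(T,U)` a non-trivial minimum
edge cut of `G` (a partition of `V` with `|T| ≥ 2`, `|U| ≥ 2`, and `|∂T| ≤ |∂S|` for every
`∅ ≠ S ⊊ V`). Let `C ⊆ V` be such that not both `|C ∩ T| > 2` and `|C ∩ U| > 2`, and let
`Core(C) = {r ∈ C : 2·|N_G(r) ∩ C| > deg_G(r) + 2}`.
Then `T ∩ Core(C) = ∅` or `U ∩ Core(C) = ∅`. -/
theorem core_not_separated_by_min_cut {V : Type*} [Fintype V] (G : SimpleGraph V)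
    (T U : Set V) (hdisj : Disjoint T U) (hcover : T ∪ U = Set.univ)
    (hT2 : 2 ≤ T.ncard) (hU2 : 2 ≤ U.ncard)
    (hmin : ∀ S : Set V, S.Nonempty → S ≠ Set.univ →
      (edgeCut G T).ncard ≤ (edgeCut G S).ncard)
    (C : Set V)
    (hC : ¬ (2 < (C ∩ T).ncard ∧ 2 < (C ∩ U).ncard)) :
    T ∩ {r ∈ C | (G.neighborSet r).ncard + 2 < 2 * (G.neighborSet r ∩ C).ncard} = ∅ ∨
      U ∩ {r ∈ C | (G.neighborSet r).ncard + 2 < 2 * (G.neighborSet r ∩ C).ncard} = ∅ := by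
  have hU : U = Tᶜ := by
    ext x
    simp only [Set.mem_compl_iff]
    constructor
    · intro hx hxT
      exact Set.disjoint_left.mp hdisj hxT hx
    · intro hx
      rcases (hcover ▸ Set.mem_univ x : x ∈ T ∪ U) with h | h
      · exact absurd h hx
      · exact h
  have hTne : T.Nonempty := by
    rcases Set.eq_empty_or_nonempty T with h | h
    · rw [h, Set.ncard_empty] at hT2; omega
    · exact h
  have hUne : U.Nonempty := by
    rcases Set.eq_empty_or_nonempty U with h | h
    · rw [h, Set.ncard_empty] at hU2; omega
    · exact h
  rcases not_and_or.mp hC with h | h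
  · left
    exact core_empty_aux G T hT2 (hU ▸ hUne) hmin C (not_lt.mp h)
  · right
    refine core_empty_aux G U hU2 ?_ ?_ C (not_lt.mp h)
    · rw [hU, compl_compl]; exact hTne
    · intro S hS1 hS2
      rw [hU, edgeCut_compl]
      exact hmin S hS1 hS2
end

section
/- Let a, b, p be real numbers with 1 ≤ a ≤ b and p ≥ 0, and set M = a + b + p. Let m and r be real numbers with m ≥ M and r ≥ 1. If p ≤ (2a + p)/(12·r·log₂ m), then p ≤ ( M·log₂ M − a·log₂ a − b·log₂ b ) / (6·r·log₂ m). -/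
/-- Let `1 ≤ a ≤ b`, `p ≥ 0`, `M = a + b + p`, `m ≥ M`, `r ≥ 1` be reals.
If `p ≤ (2a + p)/(12·r·log₂ m)`, then
`p ≤ (M·log₂ M − a·log₂ a − b·log₂ b)/(6·r·log₂ m)`. -/
theorem potential_charging (a b p M m r : ℝ)
    (ha : 1 ≤ a) (hab : a ≤ b) (hp : 0 ≤ p)
    (hM : M = a + b + p) (hm : M ≤ m) (hr : 1 ≤ r)
    (hsparse : p ≤ (2 * a + p) / (12 * r * Real.logb 2 m)) :
    p ≤ (M * Real.logb 2 M - a * Real.logb 2 a - b * Real.logb 2 b) /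
        (6 * r * Real.logb 2 m) := by
  have hb2 : (1:ℝ) < 2 := one_lt_two
  have h2M : 2 ≤ M := by nlinarith
  have h2m : (2:ℝ) ≤ m := le_trans h2M hm
  have hlogm : 1 ≤ Real.logb 2 m := by
    rw [← Real.logb_self_eq_one hb2]
    exact Real.logb_le_logb_of_le hb2 (by norm_num) h2m
  have hlogM : 1 ≤ Real.logb 2 M := by
    rw [← Real.logb_self_eq_one hb2]
    exact Real.logb_le_logb_of_le hb2 (by norm_num) h2M
  have ha0 : (0:ℝ) < a := by linarith
  have hb0 : (0:ℝ) < b := by linarith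
  -- logb 2 (2*a) ≤ logb 2 M
  have h2a : Real.logb 2 (2 * a) ≤ Real.logb 2 M :=
    Real.logb_le_logb_of_le hb2 (by linarith) (by nlinarith)
  have h2a' : Real.logb 2 (2 * a) = 1 + Real.logb 2 a := by
    rw [Real.logb_mul (by norm_num) (ne_of_gt ha0), Real.logb_self_eq_one hb2]
  have hA : a * (1 + Real.logb 2 a) ≤ a * Real.logb 2 M := by
    apply mul_le_mul_of_nonneg_left _ ha0.le
    rw [← h2a']; exact h2a
  have hB : b * Real.logb 2 b ≤ b * Real.logb 2 M := by
    apply mul_le_mul_of_nonneg_left _ hb0.le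
    exact Real.logb_le_logb_of_le hb2 hb0 (by linarith)
  have hC : p ≤ p * Real.logb 2 M := by nlinarith
  have hdrop : a + p ≤ M * Real.logb 2 M - a * Real.logb 2 a - b * Real.logb 2 b := by
    have : M * Real.logb 2 M = a * Real.logb 2 M + b * Real.logb 2 M + p * Real.logb 2 M := by
      rw [hM]; ring
    nlinarith
  have hLpos : 0 < Real.logb 2 m := by linarith
  have hDpos : 0 < 12 * r * Real.logb 2 m := by nlinarith
  have hDpos' : 0 < 6 * r * Real.logb 2 m := by nlinarith
  rw [le_div_iff₀ hDpos'] 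
  have hs : p * (12 * r * Real.logb 2 m) ≤ 2 * a + p := (le_div_iff₀ hDpos).mp hsparse
  nlinarith
end

section
/- Let G = (V,E) be a finite simple graph, let E' ⊆ E, and let w : E → ℕ be a weight function with w(e) = 1 for every e ∈ E' and w(e) ≥ 2 for every e ∈ E ∖ E'. Let T ⊆ E be an edge set such that the spanning subgraph (V, T) is connected and acyclic (a spanning tree of G), and such that Σ_{e∈T'} w(e) ≥ Σ_{e∈T} w(e) for every T' ⊆ E with (V, T') connected and acyclic (i.e., T is a minimum-weight spanning tree). Then for all u, v ∈ V: if u and v are connected in the graph (V, E'), then u and v are connected in the graph (V, T ∩ E'). Consequently T ∩ E' is a spanning forest of the subgraph (V, E'). -/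
/-!
If a light edge `ab` had its endpoints in different components of `T ∩ E'`, the tree path from
`a` to `b` would contain a heavy edge `xy`. Removing `xy` separates `a` from `b`, so swapping `xy`
for `ab` gives another spanning tree, lighter by `w(xy) - w(ab) ≥ 1`.
-/

namespace SimpleGraph

variable {V : Type*} {G H : SimpleGraph V}

lemma reachable_le_of_adj_le (h : G.Adj ≤ H.Reachable) : G.Reachable ≤ H.Reachable := by
  rw [reachable_eq_reflTransGen, reachable_eq_reflTransGen] at *
  exact Relation.reflTransGen_closed h

/-- Follow a path from `c` to `x`: if it uses `s(x, y)`, its part before reaching `y` avoids it. -/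
lemma Preconnected.reachable_deleteEdges_or (hG : G.Preconnected) (x y c : V) :
    (G.deleteEdges {s(x, y)}).Reachable c x ∨ (G.deleteEdges {s(x, y)}).Reachable c y := by
  classical
  obtain ⟨p, hp⟩ := hG.exists_isPath c x
  simp only [reachable_deleteEdges_iff_exists_walk]
  by_cases hxy : s(x, y) ∈ p.edges
  · have hy := p.snd_mem_support_of_mem_edges hxy
    have hx : x ∉ (p.takeUntil y hy).support :=
      Walk.endpoint_notMem_support_takeUntil hp hy (p.adj_of_mem_edges hxy).ne
    exact .inr ⟨p.takeUntil y hy, fun h ↦ hx ((p.takeUntil y hy).fst_mem_support_of_mem_edges h)⟩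
  · exact .inl ⟨p, hxy⟩

lemma Connected.connected_deleteEdges_sup_edge (hG : G.Connected) {x y a b : V}
    (hab : ¬ (G.deleteEdges {s(x, y)}).Reachable a b) :
    (G.deleteEdges {s(x, y)} ⊔ edge a b).Connected := by
  set D := G.deleteEdges {s(x, y)}
  have hD : D ≤ D ⊔ edge a b := le_sup_left
  have hne : a ≠ b := by
    rintro rfl
    exact hab .rfl
  have hab' : (D ⊔ edge a b).Adj a b := by simp [edge_adj, hne]
  have hside := hG.preconnected.reachable_deleteEdges_or x y
  have hxy : (D ⊔ edge a b).Reachable x y := by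
    rcases hside a with ha | ha <;> rcases hside b with hb | hb
    · exact absurd (ha.trans hb.symm) hab
    · exact (ha.mono hD).symm.trans (hab'.reachable.trans (hb.mono hD))
    · exact (hb.mono hD).symm.trans (hab'.symm.reachable.trans (ha.mono hD))
    · exact absurd (ha.trans hb.symm) hab
  refine (connected_iff_exists_forall_reachable _).2 ⟨x, fun c ↦ ?_⟩
  rcases hside c with hc | hc
  · exact (hc.mono hD).symm
  · exact hxy.trans (hc.mono hD).symm

lemma IsAcyclic.not_reachable_deleteEdges_of_mem_edges (hG : G.IsAcyclic) {u v : V}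
    {p : G.Walk u v} (hp : p.IsPath) {e : Sym2 V} (he : e ∈ p.edges) :
    ¬ (G.deleteEdges {e}).Reachable u v := by
  classical
  induction e with | h x y
  rw [reachable_deleteEdges_iff_exists_walk]
  rintro ⟨q, hq⟩
  exact hq (q.edges_toPath_subset_edges ((hG.subsingleton_path u v).elim q.toPath ⟨p, hp⟩ ▸ he))

lemma IsTree.deleteEdges_sup_edge (hG : G.IsTree) {x y a b : V}
    (hab : ¬ (G.deleteEdges {s(x, y)}).Reachable a b) :
    (G.deleteEdges {s(x, y)} ⊔ edge a b).IsTree :=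
  ⟨hG.connected.connected_deleteEdges_sup_edge hab,
    (hG.isAcyclic.anti (deleteEdges_le _)).sup_edge_of_not_reachable hab⟩

lemma fromEdgeSet_insert_diff_singleton (T : Set (Sym2 V)) (f : Sym2 V) (a b : V) :
    fromEdgeSet (insert s(a, b) (T \ {f})) = (fromEdgeSet T).deleteEdges {f} ⊔ edge a b := by
  rw [deleteEdges_fromEdgeSet, ← Set.union_singleton, fromEdgeSet_union]
  rfl

end SimpleGraph

open SimpleGraph

lemma finsum_mem_insert_diff_singleton_add {α M : Type*} [AddCommMonoid M] (w : α → M)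
    {s : Set α} (hs : s.Finite) {a b : α} (ha : a ∉ s) (hb : b ∈ s) :
    (∑ᶠ i ∈ insert a (s \ {b}), w i) + w b = (∑ᶠ i ∈ s, w i) + w a := by
  conv_rhs => rw [← Set.insert_sdiff_self_of_mem hb]
  rw [finsum_mem_insert w (fun h ↦ ha h.1) hs.sdiff,
    finsum_mem_insert (s := s \ {b}) w (fun h ↦ h.2 rfl) hs.sdiff]
  abel

/-- Let `G = (V,E)` be a finite simple graph, `E' ⊆ E`, and
`w : E → ℕ` a weight function with `w(e) = 1` on `E'` and `w(e) ≥ 2` on `E ∖ E'`.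
Let `T ⊆ E` be a minimum-weight spanning tree of `G` (the graph `(V,T)` is connected and
acyclic, of minimal total weight among all such `T' ⊆ E`). Then any two vertices connected
in `(V, E')` are connected in `(V, T ∩ E')`; consequently `T ∩ E'` is a spanning forest
of `(V, E')`. -/
theorem mst_light_edges_spanning_forest {V : Type*} [Fintype V] (G : SimpleGraph V)
    (E' : Set (Sym2 V)) (hE'sub : E' ⊆ G.edgeSet)
    (w : Sym2 V → ℕ)
    (hw1 : ∀ e ∈ E', w e = 1)
    (hw2 : ∀ e ∈ G.edgeSet \ E', 2 ≤ w e)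
    (T : Set (Sym2 V)) (hTsub : T ⊆ G.edgeSet)
    (hTconn : (SimpleGraph.fromEdgeSet T).Connected)
    (hTacyclic : (SimpleGraph.fromEdgeSet T).IsAcyclic)
    (hTmin : ∀ T' ⊆ G.edgeSet, (SimpleGraph.fromEdgeSet T').Connected →
      (SimpleGraph.fromEdgeSet T').IsAcyclic → (∑ᶠ e ∈ T, w e) ≤ ∑ᶠ e ∈ T', w e) :
    (SimpleGraph.fromEdgeSet (T ∩ E')).IsAcyclic ∧
      ∀ u v : V, (SimpleGraph.fromEdgeSet E').Reachable u v →
        (SimpleGraph.fromEdgeSet (T ∩ E')).Reachable u v := by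
  refine ⟨hTacyclic.anti (fromEdgeSet_mono Set.inter_subset_left), reachable_le_of_adj_le ?_⟩
  rintro a b ⟨habE', hab⟩
  by_contra hnreach
  have habT : s(a, b) ∉ T := fun h ↦
    hnreach (Adj.reachable ((fromEdgeSet_adj _).2 ⟨⟨h, habE'⟩, hab⟩))
  obtain ⟨p, hp⟩ := hTconn.preconnected.exists_isPath a b
  obtain ⟨⟨x, y⟩, hxyE', hxyp⟩ : ∃ f ∈ E'ᶜ, f ∈ p.edges :=
    p.exists_mem_edges_of_not_reachable_deleteEdges
      (by rwa [deleteEdges_fromEdgeSet, Set.sdiff_compl])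
  have hxyT : s(x, y) ∈ T := ((edgeSet_fromEdgeSet T ▸ p.edges_subset_edgeSet hxyp) :).1
  have hT' := (IsTree.mk hTconn hTacyclic).deleteEdges_sup_edge
    (hTacyclic.not_reachable_deleteEdges_of_mem_edges hp hxyp)
  rw [← fromEdgeSet_insert_diff_singleton] at hT'
  have hmin := hTmin _ (Set.insert_subset (hE'sub habE') (Set.sdiff_subset.trans hTsub))
    hT'.connected hT'.isAcyclic
  have hswap := finsum_mem_insert_diff_singleton_add w (Set.toFinite T) habT hxyT
  have hlight := hw1 _ habE'
  have hheavy := hw2 _ ⟨hTsub hxyT, hxyE'⟩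
  omega
end

section
/- Let G = (V,E) be a finite connected simple graph with |V| = n ≥ 3, and let λ = min{ |∂S| : ∅ ≠ S ⊊ V } ≥ 1 be its edge connectivity. Let k be a real number with 1 ≤ k ≤ λ, let ε ∈ (0,1), let τ ≥ 3 be a real number, and set p = 3τ·ln(n)/(ε²·k); assume p ≤ 1. Suppose that for every positive integer j, the number of distinct edge sets of the form ∂S (with ∅ ≠ S ⊊ V) having cardinality at most j·λ is at most n^{2j}. Consider the random subgraph in which each edge of E is included independently with probability p, and let X(S) denote the number of included edges of ∂S. Then the probability that there exists S with ∅ ≠ S ⊊ V and X(S) ≥ (1+ε)·p·|∂S| is at most n^{5−τ}. Equivalently, with probability at least 1 − n^{5−τ}, every cut ∂S has strictly fewer than (1+ε)p|∂S| sampled edges. -/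
/-!
For a single cut `∂S` the multiplicative Chernoff bound gives
`P(X(S) ≥ (1+ε) p |∂S|) ≤ exp(-ε² p |∂S| / 3) = n^(-τ |∂S| / k) ≤ n^(-τ ⌊|∂S|/λ⌋)`.
Grouping the cuts by `j = ⌊|∂S|/λ⌋ ≥ 1`, the counting hypothesis puts at most `n^(2(j+1))` cuts
in class `j`, so the union bound is at most `n² ∑_{j ≥ 1} (n^(2-τ))^j ≤ (3/2) n^(4-τ) ≤ n^(5-τ)`.
-/

open MeasureTheory

open ProbabilityTheory Finset Real
open scoped NNReal

section Chernoff
variable {ι : Type*} [Fintype ι] (q : ℝ≥0) (hq : q ≤ 1)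

lemma mgf_bernoulli_toNat (t : ℝ) :
    mgf (fun b : Bool => (b.toNat : ℝ)) (PMF.bernoulli q hq).toMeasure t
      = 1 - q + q * exp t := by
  simp [mgf, PMF.integral_eq_sum, PMF.bernoulli_apply, hq, add_comm]

lemma mgf_card_filter_bernoulli_pi (C : Finset ι) (t : ℝ) :
    mgf (fun ω : ι → Bool => (#{i ∈ C | ω i = true} : ℝ))
        (Measure.pi fun _ => (PMF.bernoulli q hq).toMeasure) t
      = (1 - q + q * exp t) ^ #C := by
  have hsum : (fun ω : ι → Bool => (#{i ∈ C | ω i = true} : ℝ))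
      = ∑ i ∈ C, fun ω : ι → Bool => ((ω i).toNat : ℝ) := by
    ext ω
    rw [Finset.sum_apply, Finset.card_filter]
    push_cast
    exact sum_congr rfl fun i _ => by cases ω i <;> simp
  have hindep := iIndepFun_pi (μ := fun _ : ι => (PMF.bernoulli q hq).toMeasure)
    (X := fun _ b => (b.toNat : ℝ)) (fun _ => Measurable.of_discrete.aemeasurable)
  rw [hsum, hindep.mgf_sum (fun _ => by fun_prop), prod_eq_pow_card fun i _ => ?_]
  exact (integral_comp_eval (μ := fun _ : ι => (PMF.bernoulli q hq).toMeasure) (i := i)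
    (f := fun b : Bool => exp (t * b.toNat)) (by fun_prop)).trans (mgf_bernoulli_toNat q hq t)

lemma add_sq_div_three_le_one_add_mul_log {x : ℝ} (hx0 : 0 ≤ x) (hx1 : x ≤ 1) :
    x + x ^ 2 / 3 ≤ (1 + x) * log (1 + x) := by
  have hlog := le_log_one_add_of_nonneg hx0
  rw [div_le_iff₀ (by linarith)] at hlog
  nlinarith [mul_nonneg (sq_nonneg x) (sub_nonneg.2 hx1)]

theorem measureReal_card_filter_ge_le (C : Finset ι) {ε : ℝ} (hε0 : 0 ≤ ε) (hε1 : ε ≤ 1) :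
    (Measure.pi fun _ => (PMF.bernoulli q hq).toMeasure).real
        {ω : ι → Bool | (1 + ε) * q * #C ≤ #{i ∈ C | ω i = true}}
      ≤ exp (-(ε ^ 2 * q * #C / 3)) := by
  have hmean : 0 ≤ (q : ℝ) * #C := by positivity
  calc _ ≤ exp (-log (1 + ε) * ((1 + ε) * q * #C)) * (1 - q + q * exp (log (1 + ε))) ^ #C := by
        rw [← mgf_card_filter_bernoulli_pi]
        exact measure_ge_le_exp_mul_mgf _ (log_nonneg (by linarith)) (.of_finite)
    _ ≤ exp (-log (1 + ε) * ((1 + ε) * q * #C)) * exp (q * ε) ^ #C := by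
        rw [exp_log (by linarith)]
        gcongr
        · nlinarith [q.2]
        · linarith [add_one_le_exp (q * ε)]
    _ = exp (q * #C * (ε - (1 + ε) * log (1 + ε))) := by
        rw [← exp_nat_mul, ← exp_add]; ring_nf
    _ ≤ exp (-(ε ^ 2 * q * #C / 3)) := by
        rw [exp_le_exp]
        nlinarith [mul_le_mul_of_nonneg_left (add_sq_div_three_le_one_add_mul_log hε0 hε1) hmean]

theorem measureReal_ncard_ge_le (s : Set ι) {ε : ℝ} (hε0 : 0 ≤ ε) (hε1 : ε ≤ 1) :
    (Measure.pi fun _ => (PMF.bernoulli q hq).toMeasure).real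
        {ω : ι → Bool | (1 + ε) * q * s.ncard ≤ ({i | i ∈ s ∧ ω i = true} : Set ι).ncard}
      ≤ exp (-(ε ^ 2 * q * s.ncard / 3)) := by
  have hncard : ∀ ω : ι → Bool,
      ({i | i ∈ s ∧ ω i = true} : Set ι).ncard = #{i ∈ s.toFinite.toFinset | ω i = true} := by
    intro ω
    rw [← Set.ncard_coe_finset, coe_filter]
    simp only [Set.Finite.mem_toFinset]
  simp_rw [hncard, Set.ncard_eq_toFinset_card s]
  exact measureReal_card_filter_ge_le q hq _ hε0 hε1

end Chernoff

section CutClasses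
variable {α : Type*} (𝒞 : Finset α) (size : α → ℕ) {lam : ℕ}

lemma sum_pow_size_div_le {n a : ℝ} (hlam : 0 < lam) (hmin : ∀ F ∈ 𝒞, lam ≤ size F)
    (ha : 0 ≤ a) (hr : n ^ 2 * a < 1)
    (hcount : ∀ j : ℕ, 0 < j → (#{F ∈ 𝒞 | size F ≤ j * lam} : ℝ) ≤ n ^ (2 * j)) :
    ∑ F ∈ 𝒞, a ^ (size F / lam) ≤ n ^ 2 * (n ^ 2 * a / (1 - n ^ 2 * a)) := by
  set g : α → ℕ := fun F => size F / lam
  have hfiber : ∀ j ∈ 𝒞.image g, (#{F ∈ 𝒞 | g F = j} : ℝ) ≤ n ^ (2 * (j + 1)) := by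
    intro j hj
    refine le_trans ?_ (hcount (j + 1) j.succ_pos)
    gcongr with F _
    rintro rfl
    exact (Nat.lt_mul_div_succ _ hlam).le.trans_eq (mul_comm _ _)
  have hpos : ∀ j ∈ 𝒞.image g, 1 ≤ j := by
    simp only [mem_image, forall_exists_index, and_imp]
    rintro _ F hF rfl
    exact (Nat.one_le_div_iff hlam).2 (hmin F hF)
  obtain ⟨N, hN⟩ : ∃ N, 𝒞.image g ⊆ Ico 1 N := ⟨(𝒞.image g).sup id + 1, fun j hj =>
    mem_Ico.2 ⟨hpos j hj, Nat.lt_succ_of_le (le_sup (f := id) hj)⟩⟩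
  calc ∑ F ∈ 𝒞, a ^ g F = ∑ j ∈ 𝒞.image g, #{F ∈ 𝒞 | g F = j} • a ^ j := sum_comp _ _
    _ ≤ ∑ j ∈ 𝒞.image g, n ^ 2 * (n ^ 2 * a) ^ j := by
        refine sum_le_sum fun j hj => ?_
        calc _ ≤ n ^ (2 * (j + 1)) * a ^ j := by
              rw [nsmul_eq_mul]; gcongr; exact hfiber j hj
          _ = _ := by ring
    _ ≤ n ^ 2 * ∑ j ∈ Ico 1 N, (n ^ 2 * a) ^ j := by
        rw [← mul_sum]
        exact mul_le_mul_of_nonneg_left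
          (sum_le_sum_of_subset_of_nonneg hN fun _ _ _ => by positivity) (by positivity)
    _ ≤ _ := by
        gcongr
        simpa using geom_sum_Ico_le_of_lt_one (m := 1) (n := N) (by positivity) hr

theorem sum_rpow_neg_size_div_le {n τ : ℝ} (hlam : 0 < lam) (hmin : ∀ F ∈ 𝒞, lam ≤ size F)
    (hn : 3 ≤ n) (hτ : 3 ≤ τ)
    (hcount : ∀ j : ℕ, 0 < j → (#{F ∈ 𝒞 | size F ≤ j * lam} : ℝ) ≤ n ^ (2 * j)) :
    ∑ F ∈ 𝒞, n ^ (-(τ * size F / lam)) ≤ n ^ (5 - τ) := by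
  have hn0 : 0 < n := by linarith
  set a := n ^ (-τ)
  have ha : 0 ≤ a := by positivity
  have hterm : ∀ F ∈ 𝒞, n ^ (-(τ * size F / lam)) ≤ a ^ (size F / lam) := by
    intro F _
    rw [← rpow_natCast, ← rpow_mul hn0.le]
    refine rpow_le_rpow_of_exponent_le (by linarith) ?_
    rw [neg_mul, neg_le_neg_iff, mul_div_assoc]
    exact mul_le_mul_of_nonneg_left (Nat.cast_div_le) (by linarith)
  have hcube : n ^ 3 * a ≤ 1 := by
    have : a ≤ n ^ (-((3 : ℕ) : ℝ)) :=
      rpow_le_rpow_of_exponent_le (by linarith) (by push_cast; linarith)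
    rw [rpow_neg hn0.le, rpow_natCast] at this
    calc n ^ 3 * a ≤ n ^ 3 * (n ^ 3)⁻¹ := by gcongr
      _ = 1 := mul_inv_cancel₀ (by positivity)
  have hr0 : 0 ≤ n ^ 2 * a := by positivity
  have hr : n ^ 2 * a ≤ 1 / 3 := by nlinarith
  calc _ ≤ ∑ F ∈ 𝒞, a ^ (size F / lam) := sum_le_sum hterm
    _ ≤ n ^ 2 * (n ^ 2 * a / (1 - n ^ 2 * a)) :=
        sum_pow_size_div_le 𝒞 size hlam hmin ha (by linarith) hcount
    _ ≤ n ^ 2 * (3 / 2 * (n ^ 2 * a)) := by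
        gcongr
        rw [div_le_iff₀ (by linarith)]
        nlinarith [mul_nonneg hr0 (by linarith : (0 : ℝ) ≤ 1 / 3 - n ^ 2 * a)]
    _ = 3 / 2 * (n ^ 4 * a) := by ring
    _ ≤ n * (n ^ 4 * a) := by gcongr; linarith
    _ = n ^ (5 - τ) := by
        rw [sub_eq_add_neg, rpow_add hn0]; norm_num [a]; ring

end CutClasses

section Cuts
variable {V : Type*} (G : SimpleGraph V)

def edgeCuts : Set (Set (Sym2 V)) :=
  {F | ∃ S : Set V, S.Nonempty ∧ S ≠ Set.univ ∧ F = edgeCut G S}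

lemma sInf_ncard_edgeCut_le {F : Set (Sym2 V)} (hF : F ∈ edgeCuts G) :
    sInf {m : ℕ | ∃ S : Set V, S.Nonempty ∧ S ≠ Set.univ ∧ m = (edgeCut G S).ncard}
      ≤ F.ncard := by
  obtain ⟨S, hS, hSV, rfl⟩ := hF
  exact Nat.sInf_le ⟨S, hS, hSV, rfl⟩

variable [Finite V] in
lemma card_filter_edgeCuts_ncard_le (m : ℕ) :
    #{F ∈ (edgeCuts G).toFinite.toFinset | F.ncard ≤ m} =
      {F : Set (Sym2 V) | ∃ S : Set V, S.Nonempty ∧ S ≠ Set.univ ∧ F = edgeCut G S ∧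
        F.ncard ≤ m}.ncard := by
  rw [← Set.ncard_coe_finset]
  congr 1
  ext F
  simp only [coe_filter, Set.Finite.mem_toFinset, edgeCuts, Set.mem_ofPred_eq]
  constructor
  · rintro ⟨⟨S, hS, hSV, rfl⟩, hF⟩
    exact ⟨S, hS, hSV, rfl, hF⟩
  · rintro ⟨S, hS, hSV, rfl, hF⟩
    exact ⟨⟨S, hS, hSV, rfl⟩, hF⟩

variable [Fintype G.edgeSet]

lemma ncard_preimage_coe_of_mem_edgeCuts {F : Set (Sym2 V)} (hF : F ∈ edgeCuts G) :
    ((↑) ⁻¹' F : Set G.edgeFinset).ncard = F.ncard := by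
  obtain ⟨S, -, -, rfl⟩ := hF
  refine Set.ncard_preimage_of_injective_subset_range Subtype.val_injective ?_
  rw [Subtype.range_coe, SimpleGraph.coe_edgeFinset]
  exact fun _ he => he.1

theorem measureReal_exists_edgeCut_ge_le [Finite V] (q : ℝ≥0) (hq : q ≤ 1) {ε : ℝ}
    (hε0 : 0 ≤ ε) (hε1 : ε ≤ 1) :
    (Measure.pi fun _ : G.edgeFinset => (PMF.bernoulli q hq).toMeasure).real
      {ω : G.edgeFinset → Bool | ∃ S : Set V, S.Nonempty ∧ S ≠ Set.univ ∧
        (1 + ε) * q * ((edgeCut G S).ncard : ℝ) ≤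
          (({e : G.edgeFinset | (e : Sym2 V) ∈ edgeCut G S ∧ ω e = true}).ncard : ℝ)}
      ≤ ∑ F ∈ (edgeCuts G).toFinite.toFinset, exp (-(ε ^ 2 * q * F.ncard / 3)) := by
  have hsub : {ω : G.edgeFinset → Bool | ∃ S : Set V, S.Nonempty ∧ S ≠ Set.univ ∧
        (1 + ε) * q * ((edgeCut G S).ncard : ℝ) ≤
          (({e : G.edgeFinset | (e : Sym2 V) ∈ edgeCut G S ∧ ω e = true}).ncard : ℝ)}
      ⊆ ⋃ F ∈ (edgeCuts G).toFinite.toFinset, {ω | (1 + ε) * q * (F.ncard : ℝ) ≤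
          (({e : G.edgeFinset | (e : Sym2 V) ∈ F ∧ ω e = true}).ncard : ℝ)} := by
    rintro ω ⟨S, hS, hSV, hω⟩
    exact Set.mem_biUnion ((Set.Finite.mem_toFinset _).2 ⟨S, hS, hSV, rfl⟩) hω
  refine (measureReal_mono hsub (measure_ne_top _ _)).trans <|
    (measureReal_biUnion_finset_le _ _).trans <| sum_le_sum fun F hF => ?_
  have := measureReal_ncard_ge_le q hq ((Subtype.val : G.edgeFinset → Sym2 V) ⁻¹' F) hε0 hε1
  rwa [ncard_preimage_coe_of_mem_edgeCuts G ((Set.Finite.mem_toFinset _).1 hF)] at this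

end Cuts

lemma exp_neg_mul_le_rpow_neg {n k τ ε m lam : ℝ} (hn : 1 ≤ n) (hk : 0 < k) (hklam : k ≤ lam)
    (hε : 0 < ε) (hτ : 0 ≤ τ) (hm : 0 ≤ m) :
    exp (-(ε ^ 2 * (3 * τ * log n / (ε ^ 2 * k)) * m / 3)) ≤ n ^ (-(τ * m / lam)) := by
  have hexp : exp (-(ε ^ 2 * (3 * τ * log n / (ε ^ 2 * k)) * m / 3)) = n ^ (-(τ * m / k)) := by
    rw [rpow_def_of_pos (by linarith)]
    congr 1
    field_simp
  rw [hexp]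
  exact rpow_le_rpow_of_exponent_le hn (neg_le_neg (by gcongr))

theorem sampled_cuts_concentrate_general {V : Type*} [Fintype V]
    (G : SimpleGraph V) [DecidableRel G.Adj]
    (hn : 3 ≤ Fintype.card V)
    (lam : ℕ)
    (hlam : lam = sInf {m : ℕ | ∃ S : Set V, S.Nonempty ∧ S ≠ Set.univ ∧
      m = (edgeCut G S).ncard})
    (hlam1 : 1 ≤ lam)
    (k : ℝ) (hk1 : 1 ≤ k) (hklam : k ≤ (lam : ℝ))
    (ε : ℝ) (hε0 : 0 < ε) (hε1 : ε < 1)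
    (τ : ℝ) (hτ : 3 ≤ τ)
    (p : ℝ) (hp : p = 3 * τ * Real.log (Fintype.card V) / (ε ^ 2 * k))
    (hp1 : p ≤ 1)
    (hcount : ∀ j : ℕ, 0 < j →
      {F : Set (Sym2 V) | ∃ S : Set V, S.Nonempty ∧ S ≠ Set.univ ∧ F = edgeCut G S ∧
        F.ncard ≤ j * lam}.ncard ≤ (Fintype.card V) ^ (2 * j)) :
    (Measure.pi fun _ : G.edgeFinset =>
        (PMF.bernoulli (Real.toNNReal p) (Real.toNNReal_le_one.mpr hp1)).toMeasure)
      {ω : G.edgeFinset → Bool | ∃ S : Set V, S.Nonempty ∧ S ≠ Set.univ ∧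
        (1 + ε) * p * ((edgeCut G S).ncard : ℝ) ≤
          (({e : G.edgeFinset | (e : Sym2 V) ∈ edgeCut G S ∧ ω e = true}).ncard : ℝ)}
      ≤ ENNReal.ofReal ((Fintype.card V : ℝ) ^ ((5 : ℝ) - τ)) := by
  have hn3 : (3 : ℝ) ≤ Fintype.card V := by exact_mod_cast hn
  have hp0 : 0 ≤ p := by
    have := log_nonneg (by linarith : (1 : ℝ) ≤ Fintype.card V)
    rw [hp]; positivity
  have hunion := measureReal_exists_edgeCut_ge_le G _ (Real.toNNReal_le_one.mpr hp1) hε0.le hε1.le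
  rw [Real.coe_toNNReal _ hp0] at hunion
  have hmin : ∀ F ∈ (edgeCuts G).toFinite.toFinset, lam ≤ F.ncard := fun F hF =>
    hlam ▸ sInf_ncard_edgeCut_le G ((Set.Finite.mem_toFinset _).1 hF)
  have hclass : ∀ j : ℕ, 0 < j → (#{F ∈ (edgeCuts G).toFinite.toFinset | F.ncard ≤ j * lam} : ℝ)
      ≤ (Fintype.card V : ℝ) ^ (2 * j) := fun j hj => by
    rw [card_filter_edgeCuts_ncard_le]
    exact_mod_cast hcount j hj
  rw [← ofReal_measureReal]
  refine ENNReal.ofReal_le_ofReal (hunion.trans ?_)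
  calc _ ≤ ∑ F ∈ (edgeCuts G).toFinite.toFinset, (Fintype.card V : ℝ) ^ (-(τ * F.ncard / lam)) :=
        sum_le_sum fun F _ => hp ▸ exp_neg_mul_le_rpow_neg (by linarith) (by linarith) hklam hε0
          (by linarith) (by positivity)
    _ ≤ _ := sum_rpow_neg_size_div_le _ _ hlam1 hmin hn3 hτ hclass

/-- Let `G` be a finite connected simple graph on `n ≥ 3` vertices with
edge connectivity `λ ≥ 1`, let `1 ≤ k ≤ λ`, `ε ∈ (0,1)`, `τ ≥ 3`, and
`p = 3τ ln n/(ε²k) ≤ 1`. Assume Karger's cut-counting bound: for every `j ≥ 1`, the number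
of distinct cuts `∂S` of cardinality at most `j·λ` is at most `n^{2j}`. If each edge of `G`
is included independently with probability `p` (product Bernoulli measure over the edges),
then the probability that some cut `∂S` has at least `(1+ε)·p·|∂S|` sampled edges is at
most `n^{5−τ}`. -/
theorem sampled_cuts_concentrate {V : Type*} [Fintype V] [DecidableEq V]
    (G : SimpleGraph V) [DecidableRel G.Adj]
    (hn : 3 ≤ Fintype.card V) (hconn : G.Connected)
    (lam : ℕ)
    (hlam : lam = sInf {m : ℕ | ∃ S : Set V, S.Nonempty ∧ S ≠ Set.univ ∧
      m = (edgeCut G S).ncard})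
    (hlam1 : 1 ≤ lam)
    (k : ℝ) (hk1 : 1 ≤ k) (hklam : k ≤ (lam : ℝ))
    (ε : ℝ) (hε0 : 0 < ε) (hε1 : ε < 1)
    (τ : ℝ) (hτ : 3 ≤ τ)
    (p : ℝ) (hp : p = 3 * τ * Real.log (Fintype.card V) / (ε ^ 2 * k))
    (hp1 : p ≤ 1)
    (hcount : ∀ j : ℕ, 0 < j →
      {F : Set (Sym2 V) | ∃ S : Set V, S.Nonempty ∧ S ≠ Set.univ ∧ F = edgeCut G S ∧
        F.ncard ≤ j * lam}.ncard ≤ (Fintype.card V) ^ (2 * j)) :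
    (Measure.pi fun _ : G.edgeFinset =>
        (PMF.bernoulli (Real.toNNReal p) (Real.toNNReal_le_one.mpr hp1)).toMeasure)
      {ω : G.edgeFinset → Bool | ∃ S : Set V, S.Nonempty ∧ S ≠ Set.univ ∧
        (1 + ε) * p * ((edgeCut G S).ncard : ℝ) ≤
          (({e : G.edgeFinset | (e : Sym2 V) ∈ edgeCut G S ∧ ω e = true}).ncard : ℝ)}
      ≤ ENNReal.ofReal ((Fintype.card V : ℝ) ^ ((5 : ℝ) - τ)) :=
  sampled_cuts_concentrate_general G hn lam hlam hlam1 k hk1 hklam ε hε0 hε1 τ hτ p hp hp1 hcount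
end
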